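/- arXiv:math/0305323 — 9 statements merged into one kernel-verified Lean document; each statement's English description precedes it below -/
import Mathlib

section
/- For all integers $L\ge 0$ and formal variables $q,z$, the identity $\sum_{l\ge 0}\frac{(q^{l+1}z)_\infty}{(q)_l}q^{l(l-2L)}z^l=\sum_{s=0}^{2L}\begin{bmatrix}2L\\ s\end{bmatrix}_{q^{-1}}z^s$ holds as formal power series in $z$ over $\mathbb{C}(q)$ (equivalently over formal Laurent series in $q$), where $(z)_n=\prod_{j=0}^{n-1}(1-q^jz)$, $(z)_\infty=\prod_{j\ge 0}(1-q^jz)$, and $\begin{bmatrix}m\\ n\end{bmatrix}_{q^{-1}}$ is the Gaussian binomial coefficient evaluated at $q^{-1}$. -/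
/-!
Euler's identity evaluates the coefficient of `z^k` in `(q^{l+1} z)_∞` as
`(-1)^k q^{k(l+1) + C(k,2)} / (q)_k`. After the substitution `l ↦ s - l`, the coefficient of `z^s`
on the left becomes `q^{s(s-2L)} / (q)_s` times the `q`-binomial expansion of
`∏_{j<s} (1 - q^{j + 2L - s + 1})`. This product vanishes when `s > 2L` and equals
`(q)_{2L} / (q)_{2L-s}` otherwise, and `[2L, s]_{q⁻¹} = q^{-s(2L-s)} [2L, s]_q`.
-/

noncomputable section

/-- The formal variable `q`, inside the field of formal Laurent series `ℂ((q))`. -/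
def qvar : LaurentSeries ℂ := HahnSeries.single (1 : ℤ) (1 : ℂ)

/-- The `q`-Pochhammer symbol `(q)_m = ∏_{j=1}^{m} (1 - q^j)`. -/
def qPoch (m : ℕ) : LaurentSeries ℂ := ∏ j ∈ Finset.range m, (1 - qvar ^ (j + 1))

/-- The Gaussian binomial coefficient `[M, k]_x = (x)_M / ((x)_k (x)_{M-k})` evaluated at a
given `x` (for `k ≤ M`). -/
def gaussAt (x : LaurentSeries ℂ) (M k : ℕ) : LaurentSeries ℂ :=
  (∏ j ∈ Finset.range M, (1 - x ^ (j + 1))) /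
    ((∏ j ∈ Finset.range k, (1 - x ^ (j + 1))) *
      ∏ j ∈ Finset.range (M - k), (1 - x ^ (j + 1)))

/-- The coefficient of `z^k` in the infinite product `(q^{l+1} z)_∞ = ∏_{j≥0}(1-q^{l+1+j}z)`:
it is `(-1)^k ∑ q^{j₁+⋯+j_k}` over subsets `{j₁<⋯<j_k} ⊆ {l+1, l+2, …}`. -/
def coeffPochInf (l k : ℕ) : LaurentSeries ℂ :=
  (-1 : LaurentSeries ℂ) ^ k *
    ∑' S : {S : Finset ℕ // S.card = k}, ∏ j ∈ S.1, qvar ^ (l + 1 + j)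

open Filter Topology Finset

section QBinomial

variable {R : Type*} [CommRing R] (q : R)

def qPochhammer (m : ℕ) : R := ∏ j ∈ range m, (1 - q ^ (j + 1))

lemma qPochhammer_zero : qPochhammer q 0 = 1 := prod_range_zero _

lemma qPochhammer_succ (m : ℕ) :
    qPochhammer q (m + 1) = qPochhammer q m * (1 - q ^ (m + 1)) :=
  prod_range_succ _ m

lemma qPochhammer_mul_prod_one_sub_pow_mul (d s : ℕ) :
    qPochhammer q d * ∏ j ∈ range s, (1 - q ^ j * q ^ (d + 1)) = qPochhammer q (d + s) := by
  rw [qPochhammer, qPochhammer, prod_range_add]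
  congr 1
  exact prod_congr rfl fun j _ => by ring

/-- The Gaussian binomial coefficient `[n, k]_q`, through the `q`-Pascal rule. -/
def qChoose : ℕ → ℕ → R
  | _, 0 => 1
  | 0, _ + 1 => 0
  | n + 1, k + 1 => qChoose n k + q ^ (k + 1) * qChoose n (k + 1)

@[simp] lemma qChoose_zero_right (n : ℕ) : qChoose q n 0 = 1 := by cases n <;> rfl

lemma qChoose_succ_succ (n k : ℕ) :
    qChoose q (n + 1) (k + 1) = qChoose q n k + q ^ (k + 1) * qChoose q n (k + 1) := rfl

lemma qChoose_eq_zero_of_lt : ∀ {n k : ℕ}, n < k → qChoose q n k = 0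
  | 0, _ + 1, _ => rfl
  | n + 1, k + 1, h => by
    rw [qChoose_succ_succ, qChoose_eq_zero_of_lt (by omega), qChoose_eq_zero_of_lt (by omega),
      mul_zero, add_zero]

lemma qChoose_mul_qPochhammer_mul_qPochhammer : ∀ {n k : ℕ}, k ≤ n →
    qChoose q n k * qPochhammer q k * qPochhammer q (n - k) = qPochhammer q n
  | n, 0, _ => by simp [qPochhammer_zero]
  | n + 1, k + 1, h => by
    have hk := qChoose_mul_qPochhammer_mul_qPochhammer (Nat.le_of_succ_le_succ h)
    have hk_succ : qChoose q n (k + 1) * qPochhammer q (k + 1) * qPochhammer q (n - k) =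
        (1 - q ^ (n - k)) * qPochhammer q n := by
      rcases (Nat.le_of_succ_le_succ h).eq_or_lt with rfl | hlt
      · simp [qChoose_eq_zero_of_lt q (Nat.lt_succ_self k)]
      · rw [← qChoose_mul_qPochhammer_mul_qPochhammer hlt, show n - k = n - (k + 1) + 1 by omega,
          qPochhammer_succ q (n - (k + 1)), show n - (k + 1) + 1 = n - k by omega]
        ring
    have hpow : q ^ (k + 1) * q ^ (n - k) = q ^ (n + 1) := by rw [← pow_add]; congr 1; omega
    rw [qChoose_succ_succ, Nat.add_sub_add_right, qPochhammer_succ q n]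
    linear_combination (1 - q ^ (k + 1)) * hk + q ^ (k + 1) * hk_succ - qPochhammer q n * hpow +
      qChoose q n k * qPochhammer q (n - k) * qPochhammer_succ q k

/-- The `q`-binomial theorem. -/
theorem prod_one_sub_pow_mul_eq_sum_qChoose (n : ℕ) (x : R) :
    ∏ j ∈ range n, (1 - q ^ j * x) =
      ∑ k ∈ range (n + 1), (-1) ^ k * q ^ k.choose 2 * qChoose q n k * x ^ k := by
  induction n generalizing x with
  | zero => simp
  | succ n ih =>
    set a : ℕ → R := fun k => (-1) ^ k * q ^ k.choose 2 * qChoose q n k * q ^ k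
    have ha_zero : a 0 = 1 := by simp [a]
    have ha_top : a (n + 1) = 0 := by simp [a, qChoose_eq_zero_of_lt q (Nat.lt_succ_self n)]
    have hshift : ∏ j ∈ range n, (1 - q ^ (j + 1) * x) = ∑ k ∈ range (n + 2), a k * x ^ k := by
      simp_rw [pow_succ, mul_assoc, ih (q * x), sum_range_succ _ (n + 1), ha_top, zero_mul,
        add_zero, a]
      refine sum_congr rfl fun k _ => ?_
      ring
    have hcoeff (k : ℕ) :
        (-1) ^ (k + 1) * q ^ (k + 1).choose 2 * qChoose q (n + 1) (k + 1) = a (k + 1) - a k := by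
      simp only [a, qChoose_succ_succ, Nat.choose_succ_succ' k 1, Nat.choose_one_right, pow_add,
        pow_one]
      ring
    calc ∏ j ∈ range (n + 1), (1 - q ^ j * x)
        = (∑ k ∈ range (n + 2), a k * x ^ k) * (1 - x) := by
          rw [prod_range_succ', hshift, pow_zero, one_mul]
      _ = ∑ k ∈ range (n + 1), (a (k + 1) - a k) * x ^ (k + 1) + 1 := by
          rw [mul_one_sub, sum_mul, sum_range_succ' (fun k => a k * x ^ k),
            sum_range_succ (fun k => a k * x ^ k * x), ha_top]
          simp only [sub_mul, sum_sub_distrib, pow_succ, mul_assoc, ha_zero]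
          ring
      _ = _ := by
          rw [sum_range_succ' _ (n + 1)]
          simp [hcoeff]

end QBinomial

section Field

variable {K : Type*} [Field K] {q : K}

lemma qChoose_eq_div {n k : ℕ} (hk : k ≤ n) (hq : qPochhammer q k * qPochhammer q (n - k) ≠ 0) :
    qChoose q n k = qPochhammer q n / (qPochhammer q k * qPochhammer q (n - k)) :=
  eq_div_of_mul_eq hq <| by rw [← mul_assoc, qChoose_mul_qPochhammer_mul_qPochhammer q hk]

lemma qPochhammer_inv (hq : q ≠ 0) (m : ℕ) :
    qPochhammer q⁻¹ m = (-1) ^ m * qPochhammer q m / q ^ (m + 1).choose 2 := by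
  induction m with
  | zero => simp [qPochhammer_zero]
  | succ m ih =>
    rw [qPochhammer_succ, qPochhammer_succ, ih, Nat.choose_succ_succ' (m + 1) 1,
      Nat.choose_one_right, inv_pow]
    field_simp
    ring

end Field

lemma Nat.add_add_one_choose_two (k d : ℕ) :
    (k + d + 1).choose 2 = (k + 1).choose 2 + (d + 1).choose 2 + k * d := by
  induction d with
  | zero => simp
  | succ d ih =>
    rw [← add_assoc, Nat.choose_succ_succ' (k + d + 1) 1, ih, Nat.choose_succ_succ' (d + 1) 1]
    simp only [Nat.choose_one_right]
    ring

lemma gaussAt_eq (x : LaurentSeries ℂ) (M k : ℕ) :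
    gaussAt x M k = qPochhammer x M / (qPochhammer x k * qPochhammer x (M - k)) := rfl

lemma gaussAt_inv_mul_pow {x : LaurentSeries ℂ} (hx : x ≠ 0) {M k : ℕ} (hk : k ≤ M) :
    gaussAt x⁻¹ M k * x ^ (k * (M - k)) = gaussAt x M k := by
  obtain ⟨d, rfl⟩ := Nat.exists_eq_add_of_le hk
  rw [gaussAt_eq, gaussAt_eq, Nat.add_sub_cancel_left, qPochhammer_inv hx, qPochhammer_inv hx,
    qPochhammer_inv hx, Nat.add_add_one_choose_two]
  simp only [pow_add]
  field_simp

instance Valued.nonarchimedeanAddGroup {R Γ₀ : Type*} [Ring R]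
    [LinearOrderedCommGroupWithZero Γ₀] [Valued R Γ₀] : NonarchimedeanAddGroup R where
  is_nonarchimedean U hU := by
    obtain ⟨γ, hγ⟩ := Valued.mem_nhds_zero.mp hU
    exact ⟨⟨Valued.v.restrict.ltAddSubgroup γ, Valued.isOpen_ball R γ.1⟩, hγ⟩

lemma Finset.tendsto_sum_id_cofinite_atTop :
    Tendsto (fun S : Finset ℕ => ∑ j ∈ S, j) cofinite atTop := by
  refine tendsto_atTop.2 fun N => eventually_cofinite.2 ?_
  refine (range N).powerset.finite_toSet.subset fun S hS => ?_
  rw [Set.mem_ofPred_eq, not_le] at hS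
  rw [mem_coe, mem_powerset]
  exact fun j hj => mem_range.2 <| (single_le_sum (fun _ _ => Nat.zero_le _) hj).trans_lt hS

lemma Finset.sum_map_addRightEmbedding_one (S : Finset ℕ) :
    ∑ j ∈ S.map (addRightEmbedding 1), j = ∑ j ∈ S, j + #S := by
  simp [sum_add_distrib]

lemma Finset.exists_map_addRightEmbedding_one_eq {T : Finset ℕ} (hT : 0 ∉ T) :
    ∃ S : Finset ℕ, S.map (addRightEmbedding 1) = T := by
  have hT' : (T : Set ℕ) ⊆ (· + 1) '' Set.univ := fun j hj =>
    ⟨j - 1, trivial, Nat.sub_add_cancel (Nat.pos_of_ne_zero (ne_of_mem_of_not_mem hj hT))⟩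
  obtain ⟨S, -, hS⟩ := subset_set_image_iff.1 hT'
  exact ⟨S, by rw [map_eq_image]; exact hS⟩

def shiftEquiv (k : ℕ) :
    {S : Finset ℕ // #S = k} ≃ {T : {T : Finset ℕ // #T = k} // 0 ∉ T.1} :=
  Equiv.ofBijective (fun S => ⟨⟨S.1.map (addRightEmbedding 1), by simp [S.2]⟩, by simp⟩) <| by
    refine ⟨fun S S' h => Subtype.ext (map_injective _ (congrArg (·.1.1) h)), ?_⟩
    rintro ⟨⟨T, hk⟩, h0⟩
    obtain ⟨S, rfl⟩ := exists_map_addRightEmbedding_one_eq h0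
    exact ⟨⟨S, by simpa using hk⟩, rfl⟩

def insertZeroShiftEquiv (k : ℕ) :
    {S : Finset ℕ // #S = k} ≃ {T : {T : Finset ℕ // #T = k + 1} // 0 ∈ T.1} :=
  Equiv.ofBijective
    (fun S => ⟨⟨insert 0 (S.1.map (addRightEmbedding 1)), by simp [S.2]⟩, by simp⟩) <| by
    refine ⟨fun S S' h => Subtype.ext (map_injective (addRightEmbedding 1) ?_), ?_⟩
    · simpa using congrArg (fun T => T.1.1.erase 0) h
    rintro ⟨⟨T, hk⟩, h0⟩
    obtain ⟨S, hS⟩ := exists_map_addRightEmbedding_one_eq (notMem_erase 0 T)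
    refine ⟨⟨S, ?_⟩, ?_⟩
    · simpa [card_erase_of_mem h0, hk] using congrArg card hS
    · simp [hS, insert_erase h0]

lemma qvar_ne_zero : qvar ≠ 0 := by
  simp [qvar]

lemma qvar_pow (n : ℕ) : qvar ^ n = HahnSeries.single (n : ℤ) 1 := by
  simp [qvar, HahnSeries.single_pow]

lemma one_sub_qvar_pow_ne_zero {n : ℕ} (hn : n ≠ 0) : 1 - qvar ^ n ≠ 0 := by
  intro h
  have h0 := congrArg (HahnSeries.coeff · 0) h
  simp [qvar_pow, HahnSeries.coeff_single_of_ne (Int.natCast_ne_zero.2 hn).symm] at h0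

lemma qPochhammer_qvar (m : ℕ) : qPochhammer qvar m = qPoch m := rfl

lemma qPoch_succ (m : ℕ) : qPoch (m + 1) = qPoch m * (1 - qvar ^ (m + 1)) :=
  qPochhammer_succ qvar m

lemma qPoch_ne_zero (m : ℕ) : qPoch m ≠ 0 :=
  prod_ne_zero_iff.2 fun _ _ => one_sub_qvar_pow_ne_zero (Nat.succ_ne_zero _)

lemma tendsto_qvar_pow_atTop_nhds_zero : Tendsto (fun n : ℕ => qvar ^ n) atTop (𝓝 0) :=
  Valued.tendsto_zero_pow_of_le_exp_neg_one (by rw [qvar, LaurentSeries.valuation_single_zpow])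

lemma summable_qvar_pow_sum (k : ℕ) :
    Summable (fun S : {S : Finset ℕ // #S = k} => qvar ^ ∑ j ∈ S.1, j) :=
  NonarchimedeanAddGroup.summable_of_tendsto_cofinite_zero <|
    tendsto_qvar_pow_atTop_nhds_zero.comp <|
      tendsto_sum_id_cofinite_atTop.comp Subtype.val_injective.tendsto_cofinite

/- Writing `g k` for the sum, splitting the `(k+1)`-subsets according to whether they contain `0`
gives `g (k+1) = q^k g k + q^(k+1) g (k+1)`. -/
lemma hasSum_qvar_pow_sum (k : ℕ) :
    HasSum (fun S : {S : Finset ℕ // #S = k} => qvar ^ ∑ j ∈ S.1, j)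
      (qvar ^ k.choose 2 / qPoch k) := by
  induction k with
  | zero =>
    simpa [qPoch] using hasSum_single (f := fun S : {S : Finset ℕ // #S = 0} => qvar ^ ∑ j ∈ S.1, j)
      ⟨∅, rfl⟩ fun S hS => absurd (Subtype.ext (card_eq_zero.1 S.2)) hS
  | succ k ih =>
    set f := fun T : {T : Finset ℕ // #T = k + 1} => qvar ^ ∑ j ∈ T.1, j
    obtain ⟨g, hg⟩ := summable_qvar_pow_sum (k + 1)
    let hasZero : Set {T : Finset ℕ // #T = k + 1} := {T | 0 ∈ T.1}
    have hmem : HasSum (f ∘ (↑) : hasZero → _) (qvar ^ k * (qvar ^ k.choose 2 / qPoch k)) := by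
      apply (insertZeroShiftEquiv k).hasSum_iff.1
      refine (ih.mul_left (qvar ^ k)).congr_fun fun S => ?_
      change qvar ^ ∑ j ∈ insert 0 (S.1.map (addRightEmbedding 1)), j = _
      rw [sum_insert (by simp), sum_map_addRightEmbedding_one, S.2, zero_add, pow_add, mul_comm]
    have hnotMem : HasSum (f ∘ (↑) : ↥hasZeroᶜ → _) (qvar ^ (k + 1) * g) := by
      apply (shiftEquiv (k + 1)).hasSum_iff.1
      refine (hg.mul_left (qvar ^ (k + 1))).congr_fun fun S => ?_
      change qvar ^ ∑ j ∈ S.1.map (addRightEmbedding 1), j = _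
      rw [sum_map_addRightEmbedding_one, S.2, pow_add, mul_comm]
    have hrec := hg.unique (hmem.add_compl hnotMem)
    have hcancel : qvar ^ k * (qvar ^ k.choose 2 / qPoch k) * qPoch k =
        qvar ^ k * qvar ^ k.choose 2 := by
      field_simp [qPoch_ne_zero k]
    convert hg using 1
    rw [div_eq_iff (qPoch_ne_zero _), qPoch_succ, Nat.choose_succ_succ' k 1, Nat.choose_one_right,
      pow_add]
    linear_combination -(qPoch k * hrec) - hcancel

lemma coeffPochInf_eq (l k : ℕ) :
    coeffPochInf l k = (-1) ^ k * qvar ^ (k * (l + 1) + k.choose 2) / qPoch k := by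
  have hterm (S : {S : Finset ℕ // #S = k}) :
      ∏ j ∈ S.1, qvar ^ (l + 1 + j) = qvar ^ (k * (l + 1)) * qvar ^ ∑ j ∈ S.1, j := by
    rw [prod_pow_eq_pow_sum, sum_add_distrib, sum_const, S.2, smul_eq_mul, pow_add]
  rw [coeffPochInf, tsum_congr hterm, ((hasSum_qvar_pow_sum k).mul_left _).tsum_eq, pow_add]
  ring

lemma sum_coeffPochInf_eq_prod (L s : ℕ) :
    ∑ l ∈ range (s + 1),
        coeffPochInf l (s - l) * qvar ^ ((l : ℤ) * ((l : ℤ) - 2 * (L : ℤ))) / qPoch l =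
      qvar ^ ((s : ℤ) * ((s : ℤ) - 2 * (L : ℤ))) / qPoch s *
        ∏ j ∈ range s, (1 - qvar ^ j * qvar ^ (2 * (L : ℤ) - s + 1)) := by
  rw [prod_one_sub_pow_mul_eq_sum_qChoose, mul_sum, ← sum_range_reflect]
  refine sum_congr rfl fun k hk => ?_
  have hks : k ≤ s := Nat.lt_succ_iff.1 (mem_range.1 hk)
  rw [Nat.add_sub_cancel, Nat.sub_sub_self hks, coeffPochInf_eq,
    qChoose_eq_div hks (mul_ne_zero (qPoch_ne_zero k) (qPoch_ne_zero (s - k)))]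
  simp only [qPochhammer_qvar]
  have hexp : qvar ^ (k * (s - k + 1) + k.choose 2) *
        qvar ^ (((s - k : ℕ) : ℤ) * ((s - k : ℕ) - 2 * (L : ℤ))) =
      qvar ^ ((s : ℤ) * ((s : ℤ) - 2 * (L : ℤ))) * qvar ^ k.choose 2 *
        (qvar ^ (2 * (L : ℤ) - s + 1)) ^ k := by
    simp only [← zpow_natCast, ← zpow_mul, ← zpow_add₀ qvar_ne_zero]
    congr 1
    push_cast [hks]
    ring
  have := qPoch_ne_zero k
  have := qPoch_ne_zero s
  have := qPoch_ne_zero (s - k)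
  field_simp
  linear_combination hexp

lemma gaussAt_qvar_inv_eq {M k : ℕ} (hk : k ≤ M) :
    gaussAt qvar⁻¹ M k = qvar ^ ((k : ℤ) * ((k : ℤ) - M)) / qPoch k *
      ∏ j ∈ range k, (1 - qvar ^ j * qvar ^ ((M : ℤ) - k + 1)) := by
  obtain ⟨d, rfl⟩ := Nat.exists_eq_add_of_le' hk
  have hinv := gaussAt_inv_mul_pow qvar_ne_zero hk
  have hprod := qPochhammer_mul_prod_one_sub_pow_mul qvar d k
  have hpow : qvar ^ ((k : ℤ) * ((k : ℤ) - (d + k : ℕ))) * qvar ^ (k * d) = 1 := by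
    rw [← zpow_natCast, ← zpow_add₀ qvar_ne_zero]
    push_cast
    ring_nf
    exact zpow_zero _
  have hx : qvar ^ (((d + k : ℕ) : ℤ) - k + 1) = qvar ^ (d + 1) := by
    rw [← zpow_natCast]
    push_cast
    ring_nf
  rw [gaussAt_eq qvar, Nat.add_sub_cancel] at hinv
  simp only [qPochhammer_qvar] at hinv hprod
  rw [hx, eq_div_of_mul_eq (qPoch_ne_zero d) ((mul_comm _ _).trans hprod)]
  linear_combination
    qvar ^ ((k : ℤ) * ((k : ℤ) - (d + k : ℕ))) * hinv - gaussAt qvar⁻¹ (d + k) k * hpow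

/-- for all `L ≥ 0`, the identity
`∑_{l≥0} (q^{l+1}z)_∞/(q)_l · q^{l(l-2L)} z^l = ∑_{s=0}^{2L} [2L, s]_{q⁻¹} z^s`
holds as formal power series in `z` over formal Laurent series in `q`; it is stated here
coefficientwise in `z`. -/
theorem stmt2 (L : ℕ) : ∀ s : ℕ,
    (∑ l ∈ Finset.range (s + 1),
      coeffPochInf l (s - l) * qvar ^ ((l : ℤ) * ((l : ℤ) - 2 * (L : ℤ))) / qPoch l) =
    (if s ≤ 2 * L then gaussAt qvar⁻¹ (2 * L) s else 0) := by
  intro s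
  rw [sum_coeffPochInf_eq_prod]
  split_ifs with hs
  · rw [gaussAt_qvar_inv_eq hs]
    push_cast
    rfl
  · have hvanish : qvar ^ (s - 2 * L - 1) * qvar ^ (2 * (L : ℤ) - s + 1) = 1 := by
      rw [← zpow_natCast, ← zpow_add₀ qvar_ne_zero, Nat.cast_sub (by omega),
        Nat.cast_sub (by omega)]
      push_cast
      ring_nf
      exact zpow_zero _
    rw [prod_eq_zero (mem_range.2 (by omega : s - 2 * L - 1 < s)) (by rw [hvanish, sub_self]),
      mul_zero]
end
end

section
/- Let $n$ be a positive integer and $K=\mathbb{C}(z_1,\dots,z_n)$. For $1\le a\le n$ define $G_a(X)=\prod_{j=1}^{a-1}(1+z_jX)\prod_{j=a+1}^{n}(1-z_jX)\in K[X]$. Then $G_1,\dots,G_n$ form a $K$-basis of the space of polynomials of degree at most $n-1$ over $K$. -/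
open Polynomial

set_option maxHeartbeats 1000000 in
theorem stmt5_aux {K : Type*} [Field K] (n : ℕ) (hn : 1 ≤ n) (z : Fin n → K)
    (hz0 : ∀ j, z j ≠ 0) (hzne : ∀ i j : Fin n, i ≠ j → z i ≠ z j)
    (hzneg : ∀ i j : Fin n, i ≠ j → z i ≠ -z j) :
    LinearIndependent K (fun a : Fin n =>
      (∏ j ∈ Finset.Iio a, (1 + C (z j) * X)) * ∏ j ∈ Finset.Ioi a, (1 - C (z j) * X)) ∧
    Submodule.span K (Set.range (fun a : Fin n =>
      (∏ j ∈ Finset.Iio a, (1 + C (z j) * X)) * ∏ j ∈ Finset.Ioi a, (1 - C (z j) * X)))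
      = Polynomial.degreeLT K n := by
  set G : Fin n → Polynomial K := fun a =>
    (∏ j ∈ Finset.Iio a, (1 + C (z j) * X)) * ∏ j ∈ Finset.Ioi a, (1 - C (z j) * X) with hG
  set x : Fin n → K := fun b => -(z b)⁻¹ with hx
  have hval : ∀ a b : Fin n, eval (x b) (G a) =
      (∏ j ∈ Finset.Iio a, (1 + z j * x b)) * ∏ j ∈ Finset.Ioi a, (1 - z j * x b) := by
    intro a b
    simp [hG, eval_prod]
  have hupper : ∀ a b : Fin n, b < a → eval (x b) (G a) = 0 := by
    intro a b hba
    rw [hval]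
    apply mul_eq_zero_of_left
    apply Finset.prod_eq_zero (Finset.mem_Iio.2 hba)
    show 1 + z b * x b = 0
    simp only [hx]
    have h1 : z b * (z b)⁻¹ = 1 := mul_inv_cancel₀ (hz0 b)
    linear_combination -h1
  have hdiag : ∀ b : Fin n, eval (x b) (G b) ≠ 0 := by
    intro b
    rw [hval]
    apply mul_ne_zero
    · rw [Finset.prod_ne_zero_iff]
      intro j hj h
      have hjb : j ≠ b := (Finset.mem_Iio.1 hj).ne
      apply hzne j b hjb
      have h1 : z j * (z b)⁻¹ = 1 := by
        simp only [hx] at h; linear_combination -h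
      calc z j = z j * (z b)⁻¹ * z b := by field_simp [hz0 b]
        _ = z b := by rw [h1, one_mul]
    · rw [Finset.prod_ne_zero_iff]
      intro j hj h
      have hjb : j ≠ b := (Finset.mem_Ioi.1 hj).ne'
      apply hzneg j b hjb
      have h1 : z j * (z b)⁻¹ = -1 := by
        simp only [hx] at h; linear_combination h
      calc z j = z j * (z b)⁻¹ * z b := by field_simp [hz0 b]
        _ = -z b := by rw [h1]; ring
  have hli : LinearIndependent K G := by
    apply Fintype.linearIndependent_iff.mpr
    intro g hg
    have heval : ∀ b : Fin n, ∑ a : Fin n, g a * eval (x b) (G a) = 0 := by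
      intro b
      have := congrArg (eval (x b)) hg
      simpa [eval_finset_sum] using this
    have key : ∀ m : ℕ, ∀ b : Fin n, (b : ℕ) = m → g b = 0 := by
      intro m
      induction m using Nat.strong_induction_on with
      | _ m ih =>
        intro b hb
        have hsum := heval b
        have hsingle : ∑ a : Fin n, g a * eval (x b) (G a) = g b * eval (x b) (G b) := by
          apply Finset.sum_eq_single
          · intro a _ hab
            rcases lt_or_gt_of_ne hab with h | h
            · have : g a = 0 := ih (a : ℕ) (by omega) a rfl
              rw [this, zero_mul]
            · rw [hupper a b h, mul_zero]
          · intro h; exact absurd (Finset.mem_univ b) h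
        rw [hsingle] at hsum
        exact (mul_eq_zero.1 hsum).resolve_right (hdiag b)
    intro b
    exact key (b : ℕ) b rfl
  refine ⟨hli, ?_⟩
  have hdegG : ∀ a : Fin n, G a ∈ degreeLT K n := by
    intro a
    rw [mem_degreeLT]
    have h1 : (G a).natDegree ≤ n - 1 := by
      have hIio : (∏ j ∈ Finset.Iio a, (1 + C (z j) * X)).natDegree ≤ (a : ℕ) := by
        refine le_trans (natDegree_prod_le _ _) ?_
        calc ∑ j ∈ Finset.Iio a, (1 + C (z j) * X).natDegree
            ≤ ∑ j ∈ Finset.Iio a, 1 := by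
              apply Finset.sum_le_sum
              intro j _
              refine le_trans (natDegree_add_le _ _) (max_le (by simp)
                (le_trans (natDegree_C_mul_le _ _) natDegree_X_le))
          _ = (a : ℕ) := by simp [Fin.card_Iio]
      have hIoi : (∏ j ∈ Finset.Ioi a, (1 - C (z j) * X)).natDegree ≤ n - 1 - (a : ℕ) := by
        refine le_trans (natDegree_prod_le _ _) ?_
        calc ∑ j ∈ Finset.Ioi a, (1 - C (z j) * X).natDegree
            ≤ ∑ j ∈ Finset.Ioi a, 1 := by
              apply Finset.sum_le_sum
              intro j _
              refine le_trans (natDegree_sub_le _ _) (max_le (by simp)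
                (le_trans (natDegree_C_mul_le _ _) natDegree_X_le))
          _ = n - 1 - (a : ℕ) := by simp [Fin.card_Ioi]
      refine le_trans (natDegree_mul_le) ?_
      have := a.isLt
      omega
    calc (G a).degree ≤ ((G a).natDegree : WithBot ℕ) := degree_le_natDegree
      _ ≤ ((n - 1 : ℕ) : WithBot ℕ) := by exact_mod_cast h1
      _ < (n : WithBot ℕ) := by exact_mod_cast Nat.sub_lt hn Nat.one_pos
  have hle : Submodule.span K (Set.range G) ≤ degreeLT K n := by
    rw [Submodule.span_le]
    rintro _ ⟨a, rfl⟩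
    exact hdegG a
  have hfd : FiniteDimensional K (degreeLT K n) :=
    Module.Finite.equiv (degreeLTEquiv K n).symm
  have hfr1 : Module.finrank K (degreeLT K n) = n := by
    rw [(degreeLTEquiv K n).finrank_eq]
    simp
  have hfr2 : Module.finrank K (Submodule.span K (Set.range G)) = n := by
    rw [finrank_span_eq_card hli]
    simp
  exact Submodule.eq_of_le_of_finrank_le hle (by rw [hfr1, hfr2])

set_option maxHeartbeats 1000000 in
set_option synthInstance.maxHeartbeats 1000000 in
/-- For `K = ℂ(z₁,…,zₙ)` and
`G_a(X) = ∏_{j<a}(1+z_jX) ∏_{j>a}(1-z_jX)`, the family `G₁,…,Gₙ` is a `K`-basis of the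
space of polynomials of degree at most `n-1` over `K`. -/
theorem stmt5 (n : ℕ) (hn : 1 ≤ n) :
    let K := FractionRing (MvPolynomial (Fin n) ℂ)
    let z : Fin n → K := fun j => algebraMap (MvPolynomial (Fin n) ℂ) K (MvPolynomial.X j)
    let G : Fin n → Polynomial K := fun a =>
      (∏ j ∈ Finset.Iio a, (1 + C (z j) * X)) * ∏ j ∈ Finset.Ioi a, (1 - C (z j) * X)
    LinearIndependent K G ∧ Submodule.span K (Set.range G) = Polynomial.degreeLT K n := by
  intro K z G
  have hinj : Function.Injective (algebraMap (MvPolynomial (Fin n) ℂ) K) :=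
    IsFractionRing.injective _ _
  have hz0 : ∀ j, z j ≠ 0 := by
    intro j h
    have : (MvPolynomial.X j : MvPolynomial (Fin n) ℂ) = 0 := by
      apply hinj; rw [map_zero]; exact h
    exact MvPolynomial.X_ne_zero j this
  have hzne : ∀ i j : Fin n, i ≠ j → z i ≠ z j := by
    intro i j hij h
    exact hij (MvPolynomial.X_injective (hinj h))
  have hzneg : ∀ i j : Fin n, i ≠ j → z i ≠ -z j := by
    intro i j hij h
    have h2 : z i + z j = 0 := by rw [h]; ring
    have h3 : (MvPolynomial.X i + MvPolynomial.X j : MvPolynomial (Fin n) ℂ) = 0 := by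
      apply hinj; rw [map_add, map_zero]; exact h2
    have := congrArg (MvPolynomial.eval fun _ => (1 : ℂ)) h3
    simp at this
  exact stmt5_aux n hn z hz0 hzne hzneg
end

section
/- Let $n\ge 1$, $K=\mathbb{C}(z_1,\dots,z_n)$, and $G_a(X)=\prod_{j<a}(1+z_jX)\prod_{j>a}(1-z_jX)$. For $0\le l\le n$, the wedge products $G_{p_1}\wedge\cdots\wedge G_{p_l}$ for $1\le p_1<\cdots<p_l\le n$ form a $K$-basis of $\Lambda^l V$, where $V$ is the $K$-vector space of polynomials in $X$ of degree at most $n-1$. -/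
/-! Evaluating at `X = 1/z_a` makes the family `G` triangular: for `b < a` the factor
`1 - z_a X` of `G_b` vanishes there, while
`G_a(1/z_a) = ∏_{j<a} (1 + z_j/z_a) ∏_{j>a} (1 - z_j/z_a)` is nonzero because the `z_j` are
linearly independent over `ℂ`. So the `G_a` are `n` independent vectors of the
`n`-dimensional space `V`, i.e. a basis, and the wedges of a basis along strictly increasing
index maps form a basis of `Λ^l V`. -/

open Polynomial

lemma LinearIndependent.add_smul_ne_zero {k M ι : Type*} [Ring k] [Nontrivial k] [AddCommGroup M]
    [Module k M] {v : ι → M} (hv : LinearIndependent k v) {a j : ι} (h : a ≠ j) (c : k) :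
    v a + c • v j ≠ 0 := fun hsum =>
  one_ne_zero ((LinearIndepOn.pair_iff v h).mp (hv.linearIndepOn _) 1 c (by rwa [one_smul])).1

section StrictMono

variable {R M I : Type*} [CommRing R] [AddCommGroup M] [Module R M] [LinearOrder I] {l : ℕ}

def strictMonoEquivPowersetCard : {p : Fin l → I // StrictMono p} ≃ Set.powersetCard I l :=
  (⟨fun p => OrderEmbedding.ofStrictMono p.1 p.2, fun f => ⟨f, f.strictMono⟩, fun _ => rfl,
    fun _ => rfl⟩ : {p : Fin l → I // StrictMono p} ≃ (Fin l ↪o I)).trans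
    Set.powersetCard.ofFinEmbEquiv

lemma ExteriorAlgebra.ιMulti_strictMono_eq_ιMulti_family_comp (v : I → M) :
    (fun p : {p : Fin l → I // StrictMono p} => ExteriorAlgebra.ιMulti R l (v ∘ p.1)) =
      ExteriorAlgebra.ιMulti_family R l v ∘ strictMonoEquivPowersetCard := by
  ext p
  rw [Function.comp_apply, ExteriorAlgebra.ιMulti_family, strictMonoEquivPowersetCard,
    Equiv.trans_apply, Equiv.symm_apply_apply]
  rfl

lemma ExteriorAlgebra.span_ιMulti_strictMono {v : I → M}
    (hv : Submodule.span R (Set.range v) = ⊤) :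
    Submodule.span R (Set.range fun p : {p : Fin l → I // StrictMono p} =>
      ExteriorAlgebra.ιMulti R l (v ∘ p.1)) = ⋀[R]^l M := by
  rw [ιMulti_strictMono_eq_ιMulti_family_comp, EquivLike.range_comp]
  exact exteriorPower.ιMulti_family_span_fixedDegree_of_span R hv

end StrictMono

lemma ExteriorAlgebra.linearIndependent_ιMulti_strictMono {K V I : Type*} [Field K]
    [AddCommGroup V] [Module K V] [LinearOrder I] {l : ℕ} {v : I → V}
    (hv : LinearIndependent K v) :
    LinearIndependent K fun p : {p : Fin l → I // StrictMono p} =>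
      ExteriorAlgebra.ιMulti K l (v ∘ p.1) := by
  rw [ιMulti_strictMono_eq_ιMulti_family_comp, linearIndependent_equiv,
    exteriorPower.ιMulti_family_eq_coe_comp]
  exact (exteriorPower.ιMulti_family_linearIndependent_field (n := l) hv).map'
    (Submodule.subtype _) (Submodule.ker_subtype _)

theorem Polynomial.linearIndependent_of_eval_triangular {R ι : Type*} [CommRing R] [IsDomain R]
    [Fintype ι] [LinearOrder ι] {f : ι → R[X]} (t : ι → R)
    (hlt : ∀ ⦃a b⦄, b < a → (f b).eval (t a) = 0) (hdiag : ∀ a, (f a).eval (t a) ≠ 0) :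
    LinearIndependent R f := by
  let A : Matrix ι ι R := .of fun i j => (f i).eval (t j)
  have hA : A.det ≠ 0 := by
    rw [Matrix.det_of_isLowerTriangular A fun i j hij => hlt hij]
    exact Finset.prod_ne_zero_iff.mpr fun a _ => hdiag a
  exact .of_comp (LinearMap.pi fun j => leval (t j))
    (Matrix.linearIndependent_rows_of_det_ne_zero hA)

section SignedFactorProd

variable {K : Type*} [Field K] {n : ℕ} (z : Fin n → K)

noncomputable def signedFactorProd (a : Fin n) : K[X] :=
  (∏ j ∈ Finset.Iio a, (1 + C (z j) * X)) * ∏ j ∈ Finset.Ioi a, (1 - C (z j) * X)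

variable {z}

lemma eval_inv_signedFactorProd_of_lt {a b : Fin n} (hza : z a ≠ 0) (hba : b < a) :
    (signedFactorProd z b).eval (z a)⁻¹ = 0 := by
  rw [signedFactorProd, eval_mul, eval_prod, eval_prod]
  refine mul_eq_zero_of_right _ (Finset.prod_eq_zero (Finset.mem_Ioi.mpr hba) ?_)
  simp [mul_inv_cancel₀ hza]

lemma eval_inv_signedFactorProd_self_ne_zero {a : Fin n} (hza : z a ≠ 0)
    (hlt : ∀ j < a, z a + z j ≠ 0) (hgt : ∀ j > a, z a - z j ≠ 0) :
    (signedFactorProd z a).eval (z a)⁻¹ ≠ 0 := by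
  have hplus (j : Fin n) : (1 + C (z j) * X).eval (z a)⁻¹ = (z a + z j) / z a := by
    simp only [eval_add, eval_one, eval_mul, eval_C, eval_X]
    field_simp
  have hminus (j : Fin n) : (1 - C (z j) * X).eval (z a)⁻¹ = (z a - z j) / z a := by
    simp only [eval_sub, eval_one, eval_mul, eval_C, eval_X]
    field_simp
  simp only [signedFactorProd, eval_mul, eval_prod, hplus, hminus]
  refine mul_ne_zero (Finset.prod_ne_zero_iff.mpr fun j hj => ?_)
    (Finset.prod_ne_zero_iff.mpr fun j hj => ?_)
  · exact div_ne_zero (hlt j (Finset.mem_Iio.mp hj)) hza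
  · exact div_ne_zero (hgt j (Finset.mem_Ioi.mp hj)) hza

lemma linearIndependent_signedFactorProd {k : Type*} [Ring k] [Nontrivial k] [Module k K]
    (hz : LinearIndependent k z) : LinearIndependent K (signedFactorProd z) :=
  linearIndependent_of_eval_triangular (fun a => (z a)⁻¹)
    (fun _ _ hba => eval_inv_signedFactorProd_of_lt (hz.ne_zero _) hba)
    fun a => eval_inv_signedFactorProd_self_ne_zero (hz.ne_zero a)
      (fun j hj => by simpa using hz.add_smul_ne_zero hj.ne' 1)
      (fun j hj => by simpa [sub_eq_add_neg] using hz.add_smul_ne_zero hj.ne (-1))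

end SignedFactorProd

theorem stmt6_general (n : ℕ) (l : ℕ)
    (K : Type*) [Field K] [Algebra ℂ K] (z : Fin n → K)
    (hz : AlgebraicIndependent ℂ z)
    (G : Fin n → Polynomial K)
    (hGdef : ∀ a, G a = (∏ j ∈ Finset.Iio a, (1 + C (z j) * X)) *
      ∏ j ∈ Finset.Ioi a, (1 - C (z j) * X))
    (hG : ∀ a, G a ∈ Polynomial.degreeLT K n) :
    let Gv : Fin n → Polynomial.degreeLT K n := fun a => ⟨G a, hG a⟩
    let fam : {p : Fin l → Fin n // StrictMono p} →
        ExteriorAlgebra K (Polynomial.degreeLT K n) :=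
      fun p => ExteriorAlgebra.ιMulti K l (fun i => Gv (p.1 i))
    LinearIndependent K fam ∧
      Submodule.span K (Set.range fam) = ⋀[K]^l (Polynomial.degreeLT K n) := by
  intro Gv fam
  have hGli : LinearIndependent K G :=
    funext hGdef ▸ linearIndependent_signedFactorProd hz.linearIndependent
  have hGv : LinearIndependent K Gv := .of_comp (degreeLT K n).subtype hGli
  have : FiniteDimensional K (degreeLT K n) := (degreeLTEquiv K n).symm.finiteDimensional
  have hcard : Fintype.card (Fin n) = Module.finrank K (degreeLT K n) := by
    simp [(degreeLTEquiv K n).finrank_eq]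
  exact ⟨ExteriorAlgebra.linearIndependent_ιMulti_strictMono (l := l) (v := Gv) hGv,
    ExteriorAlgebra.span_ιMulti_strictMono (l := l) (v := Gv)
      (hGv.span_eq_top_of_card_eq_finrank' hcard)⟩

/-- Let `K = ℂ(z₁,…,zₙ)` (formalized as any field extension of `ℂ` in which
`z₁,…,zₙ` are algebraically independent), and
`G_a(X) = ∏_{j<a}(1+z_jX) ∏_{j>a}(1-z_jX)`.  For `0 ≤ l ≤ n`, the wedge products
`G_{p₁} ∧ ⋯ ∧ G_{p_l}` over `1 ≤ p₁ < ⋯ < p_l ≤ n` form a `K`-basis of `Λ^l V`, where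
`V` is the space of polynomials in `X` of degree at most `n-1` over `K`. -/
theorem stmt6 (n : ℕ) (hn : 1 ≤ n) (l : ℕ) (hl : l ≤ n)
    (K : Type*) [Field K] [Algebra ℂ K] (z : Fin n → K)
    (hz : AlgebraicIndependent ℂ z)
    (G : Fin n → Polynomial K)
    (hGdef : ∀ a, G a = (∏ j ∈ Finset.Iio a, (1 + C (z j) * X)) *
      ∏ j ∈ Finset.Ioi a, (1 - C (z j) * X))
    (hG : ∀ a, G a ∈ Polynomial.degreeLT K n) :
    let Gv : Fin n → Polynomial.degreeLT K n := fun a => ⟨G a, hG a⟩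
    let fam : {p : Fin l → Fin n // StrictMono p} →
        ExteriorAlgebra K (Polynomial.degreeLT K n) :=
      fun p => ExteriorAlgebra.ιMulti K l (fun i => Gv (p.1 i))
    LinearIndependent K fam ∧
      Submodule.span K (Set.range fam) = ⋀[K]^l (Polynomial.degreeLT K n) :=
  stmt6_general n l K z hz G hGdef hG
end

section
/- Let $n\ge 1$, $K=\mathbb{C}(z_1,\dots,z_n)$, $\Theta_n(X)=\prod_{j=1}^n(1-z_jX)$, $G_a(X)=\prod_{j<a}(1+z_jX)\prod_{j>a}(1-z_jX)$, and $A_a(t)=\frac{z_a t}{1-z_a t}\prod_{j>a}\frac{1+z_j t}{1-z_j t}$. Then $\sum_{a=1}^n A_a(t)\,G_a(X)=F_n(t|X)$, where $F_n(t|X)=\frac{t}{2(X-t)}\cdot\frac{\Theta_n(t)\Theta_n(-X)-\Theta_n(-t)\Theta_n(X)}{\Theta_n(t)}$, as rational functions in $z_1,\dots,z_n,t,X$. -/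
/-!
Multiplying by `Θ(t)` turns the `a`-th summand into `z_a t ∏_{j<a} p_j ∏_{j>a} q_j` with
`p_j = (1 - z_j t)(1 + z_j X)` and `q_j = (1 + z_j t)(1 - z_j X)`. Since
`p_a - q_a = 2 z_a (X - t)`, multiplying further by `2(X - t)` makes the sum telescope to
`∏ p - ∏ q = Θ(t)Θ(-X) - Θ(-t)Θ(X)`.
-/

open Finset

section OrderedProducts

variable {ι : Type*} [Fintype ι] [LinearOrder ι] [LocallyFiniteOrderBot ι]
  [LocallyFiniteOrderTop ι]

theorem Finset.prod_sub_prod_eq_sum_prod_Iio_mul_prod_Ioi {R : Type*} [CommRing R]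
    (p q : ι → R) :
    ∏ i, p i - ∏ i, q i =
      ∑ i, (∏ j ∈ Iio i, p j) * (p i - q i) * ∏ j ∈ Ioi i, q j := by
  have h := prod_add_ordered univ q (fun i => p i - q i)
  simp only [add_sub_cancel, filter_gt_eq_Iio, filter_lt_eq_Ioi] at h
  rw [h, add_sub_cancel_left]
  exact sum_congr rfl fun i _ => by ring

theorem Finset.prod_eq_prod_Iio_mul_mul_prod_Ioi {M : Type*} [CommMonoid M]
    (f : ι → M) (a : ι) :
    ∏ i, f i = (∏ i ∈ Iio a, f i) * f a * ∏ i ∈ Ioi a, f i := by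
  classical
  rw [mul_assoc, mul_prod_Ioi_eq_prod_Ici, ← prod_filter_mul_prod_filter_not univ (· < a)]
  congr 2 <;> ext <;> simp

theorem sum_mul_prod_Iio_mul_prod_Ioi_mul_two_mul_sub {R : Type*} [CommRing R] (z : ι → R)
    (t X : R) :
    (∑ a, z a * t * ((∏ j ∈ Iio a, (1 - z j * t) * (1 + z j * X)) *
        ∏ j ∈ Ioi a, (1 + z j * t) * (1 - z j * X))) * (2 * (X - t)) =
      t * ((∏ j, (1 - z j * t)) * ∏ j, (1 - z j * -X) -
        (∏ j, (1 - z j * -t)) * ∏ j, (1 - z j * X)) := by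
  simp only [← prod_mul_distrib, mul_neg, sub_neg_eq_add]
  rw [prod_sub_prod_eq_sum_prod_Iio_mul_prod_Ioi, sum_mul, mul_sum]
  refine sum_congr rfl fun a _ => ?_
  rw [prod_congr rfl fun j _ => mul_comm (1 + z j * t) (1 - z j * X)]
  ring

theorem sum_div_mul_prod_Ioi_mul_prod_Iio_mul_prod_Ioi_eq {K : Type*} [Field K]
    [NeZero (2 : K)] (z : ι → K) (t X : K) (hz : ∀ a, 1 - z a * t ≠ 0) (hXt : X ≠ t) :
    ∑ a, (z a * t) / (1 - z a * t) * (∏ j ∈ Ioi a, (1 + z j * t) / (1 - z j * t)) *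
        ((∏ j ∈ Iio a, (1 + z j * X)) * ∏ j ∈ Ioi a, (1 - z j * X)) =
      t / (2 * (X - t)) * (((∏ j, (1 - z j * t)) * (∏ j, (1 - z j * -X)) -
        (∏ j, (1 - z j * -t)) * ∏ j, (1 - z j * X)) / ∏ j, (1 - z j * t)) := by
  have hΘ : ∏ j, (1 - z j * t) ≠ 0 := prod_ne_zero_iff.mpr fun j _ => hz j
  have h2 : 2 * (X - t) ≠ 0 := mul_ne_zero two_ne_zero (sub_ne_zero.mpr hXt)
  have hterm : ∀ a, (z a * t) / (1 - z a * t) * (∏ j ∈ Ioi a, (1 + z j * t) / (1 - z j * t)) *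
        ((∏ j ∈ Iio a, (1 + z j * X)) * ∏ j ∈ Ioi a, (1 - z j * X)) =
      z a * t * ((∏ j ∈ Iio a, (1 - z j * t) * (1 + z j * X)) *
        ∏ j ∈ Ioi a, (1 + z j * t) * (1 - z j * X)) / ∏ j, (1 - z j * t) := fun a => by
    have hIoi : ∏ j ∈ Ioi a, (1 - z j * t) ≠ 0 := prod_ne_zero_iff.mpr fun j _ => hz j
    have hΘa := hΘ
    rw [prod_eq_prod_Iio_mul_mul_prod_Ioi _ a] at hΘa ⊢
    rw [prod_div_distrib, prod_mul_distrib, prod_mul_distrib, div_mul_div_comm,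
      div_mul_eq_mul_div, div_eq_div_iff (mul_ne_zero (hz a) hIoi) hΘa]
    ring
  rw [sum_congr rfl fun a _ => hterm a, ← sum_div, div_mul_div_comm,
    div_eq_div_iff hΘ (mul_ne_zero h2 hΘ), ← sum_mul_prod_Iio_mul_prod_Ioi_mul_two_mul_sub]
  ring

end OrderedProducts

theorem MvPolynomial.one_sub_X_mul_X_ne_zero {σ R : Type*} [CommRing R] [Nontrivial R]
    (i j : σ) :
    (1 - X i * X j : MvPolynomial σ R) ≠ 0 := fun h => by
  simpa using congrArg constantCoeff h

/-- In the field `ℂ(z₁,…,zₙ,t,X)`, with `Θₙ(x) = ∏ⱼ(1 - zⱼx)`,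
`G_a(x) = ∏_{j<a}(1+z_jx)∏_{j>a}(1-z_jx)` and
`A_a(t) = (z_a t)/(1-z_a t)·∏_{j>a}(1+z_jt)/(1-z_jt)`, one has
`∑ₐ A_a(t) G_a(X) = t/(2(X-t)) · (Θₙ(t)Θₙ(-X) - Θₙ(-t)Θₙ(X))/Θₙ(t)`. -/
theorem stmt8 (n : ℕ) :
    let L := FractionRing (MvPolynomial (Fin (n + 2)) ℂ)
    let alg := algebraMap (MvPolynomial (Fin (n + 2)) ℂ) L
    let z : Fin n → L := fun j => alg (MvPolynomial.X ⟨j, by omega⟩)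
    let t : L := alg (MvPolynomial.X ⟨n, by omega⟩)
    let Xv : L := alg (MvPolynomial.X ⟨n + 1, by omega⟩)
    let Θ : L → L := fun x => ∏ j : Fin n, (1 - z j * x)
    let G : Fin n → L → L := fun a x =>
      (∏ j ∈ Finset.Iio a, (1 + z j * x)) * ∏ j ∈ Finset.Ioi a, (1 - z j * x)
    let A : Fin n → L := fun a =>
      (z a * t) / (1 - z a * t) * ∏ j ∈ Finset.Ioi a, (1 + z j * t) / (1 - z j * t)
    ∑ a : Fin n, A a * G a Xv =
      t / (2 * (Xv - t)) * ((Θ t * Θ (-Xv) - Θ (-t) * Θ Xv) / Θ t) := by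
  intro L alg z t Xv Θ G A
  have hinj : Function.Injective alg := IsFractionRing.injective _ _
  have hz : ∀ a, 1 - z a * t ≠ 0 := fun a => by
    simpa [z, t] using (map_ne_zero_iff alg hinj).mpr (MvPolynomial.one_sub_X_mul_X_ne_zero _ _)
  have hXt : Xv ≠ t := hinj.ne <| (MvPolynomial.X_injective (R := ℂ)).ne <| by simp
  exact sum_div_mul_prod_Ioi_mul_prod_Iio_mul_prod_Ioi_eq z t Xv hz hXt
end

section
/- Fix $b<a$ in $\{1,\dots,n\}$ and let $G_c(u)=\prod_{j<c}(1+z_ju)\prod_{j>c}(1-z_ju)$, $\Theta_n(u)=\prod_{j=1}^n(1-z_ju)$, with $z_1,\dots,z_n$ distinct nonzero complex numbers with pairwise distinct squares. Then $\sum_{c=1}^n\operatorname{res}_{u=z_c^{-1}}\left(\frac{-G_a(u)G_b(-u)}{\Theta_n(-u)\Theta_n(u)}\cdot\frac{1}{u-t}\right)=\frac{1}{1-z_bt}\left(\prod_{b<j<a}\frac{1+z_jt}{1-z_jt}\right)\frac{1}{1-z_at}$, for $t$ not equal to any $\pm z_c^{-1}$. -/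
open Filter Topology Polynomial Finset Lagrange

/-!
For `u` off the poles, the factors `1 + z_j u` of `Θₙ(-u)` and the factors `1 - z_j u` with
`j ∉ [b, a]` cancel, leaving `f(u) = -N(u) / (D(u) (u - t))` with
`N(u) = ∏_{b<j<a} (1 + z_j u)` and `D(u) = ∏_{b≤j≤a} (1 - z_j u)`. Up to a constant, `D` is
the nodal polynomial of the nodes `z_c⁻¹`, `b ≤ c ≤ a`, which carry all the poles, and `deg N`
is smaller than their number. Hence the sum of the residues at the nodes is the barycentric
form of the Lagrange interpolant of `N` evaluated at `t`, i.e. `N(t) / D(t)`: minus the residue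
at `u = t`.
-/

section Intervals

variable {ι M : Type*} [LinearOrder ι] [Fintype ι] [LocallyFiniteOrder ι]
  [LocallyFiniteOrderBot ι] [LocallyFiniteOrderTop ι] [CommMonoid M] {a b : ι}

theorem Finset.prod_Iio_mul_prod_Ioi_of_lt (hba : b < a) (f : ι → M) :
    (∏ j ∈ Iio a, f j) * ∏ j ∈ Ioi b, f j = (∏ j, f j) * ∏ j ∈ Ioo b a, f j := by
  rw [← prod_union_inter]
  congr 2
  · ext j; simpa using lt_or_ge j a |>.imp_right hba.trans_le
  · ext j; simp [and_comm]

theorem Finset.prod_Ioi_mul_prod_Iio_mul_prod_Icc (hba : b ≤ a) (f : ι → M) :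
    (∏ j ∈ Ioi a, f j) * (∏ j ∈ Iio b, f j) * ∏ j ∈ Icc b a, f j = ∏ j, f j := by
  have hdisj : Disjoint (Ioi a) (Iio b) :=
    disjoint_left.2 fun j hja hjb => by simp only [mem_Ioi, mem_Iio] at hja hjb; order
  have hcompl : Ioi a ∪ Iio b = (Icc b a)ᶜ := by
    ext j
    simp only [mem_union, mem_Ioi, mem_Iio, mem_compl, mem_Icc, not_and_or, not_le]
    tauto
  rw [← prod_union hdisj, hcompl, prod_compl_mul_prod]

theorem div_prod_mul_prod_eq_prod_Ioo_div_prod_Icc {K : Type*} [Field K] (hba : b < a)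
    {p q : ι → K} (hp : ∏ j, p j ≠ 0) (hq : ∏ j, q j ≠ 0) :
    (∏ j ∈ Iio a, p j) * (∏ j ∈ Ioi a, q j) * ((∏ j ∈ Iio b, q j) * ∏ j ∈ Ioi b, p j) /
      ((∏ j, p j) * ∏ j, q j) = (∏ j ∈ Ioo b a, p j) / ∏ j ∈ Icc b a, q j := by
  have hQ := prod_Ioi_mul_prod_Iio_mul_prod_Icc hba.le q
  rw [div_eq_div_iff (mul_ne_zero hp hq) (right_ne_zero_of_mul (hQ ▸ hq)), ← hQ]
  linear_combination (∏ j ∈ Ioi a, q j) * (∏ j ∈ Iio b, q j) * (∏ j ∈ Icc b a, q j) *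
    prod_Iio_mul_prod_Ioi_of_lt hba p

end Intervals

theorem eventually_nhdsNE_ne {X : Type*} [TopologicalSpace X] [T1Space X] (x y : X) :
    ∀ᶠ u in 𝓝[≠] x, u ≠ y := by
  rcases eq_or_ne x y with rfl | h
  · exact self_mem_nhdsWithin
  · exact eventually_ne_nhdsWithin h

theorem eventually_prod_one_sub_mul_ne_zero {ι 𝕜 : Type*} [Fintype ι] [NormedField 𝕜]
    (w : ι → 𝕜) (x : 𝕜) : ∀ᶠ u in 𝓝[≠] x, ∏ j, (1 - w j * u) ≠ 0 := by
  simp only [ne_eq, prod_eq_zero_iff, mem_univ, true_and, not_exists, eventually_all]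
  exact fun j => (eventually_nhdsNE_ne x (w j)⁻¹).mono fun u hu h0 =>
    hu (eq_inv_of_mul_eq_one_right (sub_eq_zero.1 h0).symm)

theorem prod_one_sub_mul_eq_mul_eval_nodal {ι K : Type*} [Field K] (s : Finset ι) {w : ι → K}
    (hw : ∀ j ∈ s, w j ≠ 0) (u : K) :
    ∏ j ∈ s, (1 - w j * u) = (∏ j ∈ s, -w j) * (nodal s fun j => (w j)⁻¹).eval u := by
  rw [eval_nodal, ← prod_mul_distrib]
  refine prod_congr rfl fun j hj => ?_
  field_simp [hw j hj]
  ring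

theorem Polynomial.natDegree_prod_one_add_C_mul_X_le {ι R : Type*} [CommSemiring R]
    (s : Finset ι) (w : ι → R) : (∏ j ∈ s, (1 + C (w j) * X)).natDegree ≤ #s :=
  (natDegree_prod_le _ _).trans <| (sum_le_sum fun j _ => by compute_degree!).trans_eq
    (card_eq_sum_ones s).symm

namespace Lagrange

variable {ι : Type*} {s : Finset ι} {i : ι}

theorem sum_nodalWeight_mul_inv_sub_mul_eval [DecidableEq ι] {F : Type*} [Field F]
    {v : ι → F} (hvs : Set.InjOn v s) {P : F[X]} (hP : P.degree < #s) {x : F}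
    (hx : ∀ i ∈ s, x ≠ v i) :
    ∑ i ∈ s, nodalWeight s v i * (x - v i)⁻¹ * P.eval (v i) =
      P.eval x / (nodal s v).eval x := by
  rw [eq_div_iff (eval_nodal_not_at_node hx), mul_comm]
  conv_rhs => rw [eq_interpolate hvs hP]
  exact (eval_interpolate_not_at_node _ hx).symm

variable {𝕜 : Type*} [NormedField 𝕜] {v : ι → 𝕜} {g : 𝕜 → 𝕜}

theorem tendsto_sub_mul_div_eval_nodal [DecidableEq ι] (hvs : Set.InjOn v s) (hi : i ∈ s)
    (hg : ContinuousAt g (v i)) :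
    Tendsto (fun u => (u - v i) * (g u / (nodal s v).eval u)) (𝓝[≠] (v i))
      (𝓝 (g (v i) * nodalWeight s v i)) := by
  have hne : (nodal (s.erase i) v).eval (v i) ≠ 0 := eval_nodal_not_at_node fun j hj =>
    hvs.ne hi (mem_of_mem_erase hj) (ne_of_mem_erase hj).symm
  have hcont : ContinuousAt (fun u => g u / (nodal (s.erase i) v).eval u) (v i) :=
    hg.div (Polynomial.continuousAt _) hne
  rw [nodalWeight_eq_eval_nodal_erase_inv, ← div_eq_mul_inv]
  refine (hcont.tendsto.mono_left nhdsWithin_le_nhds).congr' ?_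
  filter_upwards [self_mem_nhdsWithin] with u hu
  rw [nodal_eq_mul_nodal_erase hi, eval_mul, eval_sub, eval_X, eval_C, mul_div_assoc',
    mul_div_mul_left _ _ (sub_ne_zero.2 hu)]

theorem tendsto_sub_mul_div_eval_nodal_of_notMem {x : 𝕜} (hx : ∀ i ∈ s, x ≠ v i)
    (hg : ContinuousAt g x) :
    Tendsto (fun u => (u - x) * (g u / (nodal s v).eval u)) (𝓝[≠] x) (𝓝 0) := by
  have hcont : ContinuousAt (fun u => (u - x) * (g u / (nodal s v).eval u)) x :=
    (continuousAt_id.sub continuousAt_const).mul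
      (hg.div (Polynomial.continuousAt _) (eval_nodal_not_at_node hx))
  simpa only [sub_self, zero_mul] using hcont.tendsto.mono_left nhdsWithin_le_nhds

theorem exists_tendsto_sub_mul_and_sum_eq [Fintype ι] [DecidableEq ι] (s : Finset ι)
    (hv : Function.Injective v) {P : 𝕜[X]} (hP : P.degree < #s) (k : 𝕜) {t : 𝕜}
    (ht : ∀ i, t ≠ v i) {f : 𝕜 → 𝕜}
    (hf : ∀ i, f =ᶠ[𝓝[≠] v i] fun u => k * P.eval u / (t - u) / (nodal s v).eval u) :
    ∃ r : ι → 𝕜, (∀ i, Tendsto (fun u => (u - v i) * f u) (𝓝[≠] (v i)) (𝓝 (r i))) ∧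
      ∑ i, r i = k * P.eval t / (nodal s v).eval t := by
  set g : 𝕜 → 𝕜 := fun u => k * P.eval u / (t - u)
  have hg : ∀ i, ContinuousAt g (v i) := fun i =>
    (continuousAt_const.mul (Polynomial.continuousAt _)).div
      (continuousAt_const.sub continuousAt_id) (sub_ne_zero.2 (ht i))
  refine ⟨fun i => if i ∈ s then g (v i) * nodalWeight s v i else 0, fun i => ?_, ?_⟩
  · have hfi := (hf i).mono fun u hu => congrArg ((u - v i) * ·) hu.symm
    dsimp only
    split_ifs with hi
    · exact (tendsto_sub_mul_div_eval_nodal hv.injOn hi (hg i)).congr' hfi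
    · exact (tendsto_sub_mul_div_eval_nodal_of_notMem
        (fun j hj h => hi (by rwa [hv h])) (hg i)).congr' hfi
  · rw [sum_ite_mem, univ_inter, mul_div_assoc,
      ← sum_nodalWeight_mul_inv_sub_mul_eval hv.injOn hP fun i _ => ht i, mul_sum]
    exact sum_congr rfl fun i _ => by simp only [g]; ring

end Lagrange

/-- For `b < a`, distinct nonzero `z₁,…,zₙ` with pairwise distinct squares,
and `t ≠ ±z_c⁻¹`, the sum of the residues of
`f(u) = -G_a(u)G_b(-u)/(Θₙ(-u)Θₙ(u)(u-t))` at `u = z_c⁻¹` equals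
`1/(1-z_b t) · ∏_{b<j<a} (1+z_j t)/(1-z_j t) · 1/(1-z_a t)`.  Residues of the simple poles
are expressed as limits `r_c = lim_{u→z_c⁻¹} (u - z_c⁻¹) f(u)`. -/
theorem stmt9 (n : ℕ) (a b : Fin n) (hba : b < a) (z : Fin n → ℂ)
    (hz0 : ∀ c, z c ≠ 0) (hzsq : ∀ c c', c ≠ c' → z c ^ 2 ≠ z c' ^ 2)
    (t : ℂ) (ht : ∀ c, t ≠ (z c)⁻¹ ∧ t ≠ -(z c)⁻¹) :
    let G : Fin n → ℂ → ℂ := fun c u =>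
      (∏ j ∈ Finset.Iio c, (1 + z j * u)) * ∏ j ∈ Finset.Ioi c, (1 - z j * u)
    let Θ : ℂ → ℂ := fun u => ∏ j : Fin n, (1 - z j * u)
    let f : ℂ → ℂ := fun u => (-(G a u * G b (-u))) / (Θ (-u) * Θ u * (u - t))
    ∃ r : Fin n → ℂ,
      (∀ c, Filter.Tendsto (fun u => (u - (z c)⁻¹) * f u)
        (nhdsWithin (z c)⁻¹ {(z c)⁻¹}ᶜ) (nhds (r c))) ∧
      ∑ c, r c =
        1 / (1 - z b * t) * (∏ j ∈ Finset.Ioo b a, (1 + z j * t) / (1 - z j * t)) *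
          (1 / (1 - z a * t)) := by
  intro G Θ f
  set x : Fin n → ℂ := fun j => (z j)⁻¹
  set P : ℂ[X] := ∏ j ∈ Ioo b a, (1 + C (z j) * X)
  have hP : ∀ u, P.eval u = ∏ j ∈ Ioo b a, (1 + z j * u) := by simp [P, eval_prod]
  have hPdeg : P.degree < #(Icc b a) := degree_le_natDegree.trans_lt <| Nat.cast_lt.2 <|
    (natDegree_prod_one_add_C_mul_X_le _ _).trans_lt <| card_lt_card <|
      (ssubset_iff_of_subset Ioo_subset_Icc_self).2 ⟨b, by simp [hba.le], by simp⟩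
  have hx : Function.Injective x := fun i j hij => by_contra fun hne =>
    hzsq i j hne (by rw [inv_injective hij])
  have hD : ∀ u,
      ∏ j ∈ Icc b a, (1 - z j * u) = (∏ j ∈ Icc b a, -z j) * (nodal (Icc b a) x).eval u :=
    prod_one_sub_mul_eq_mul_eval_nodal _ fun j _ => hz0 j
  have hf : ∀ c, f =ᶠ[𝓝[≠] x c]
      fun u => (∏ j ∈ Icc b a, -z j)⁻¹ * P.eval u / (t - u) / (nodal (Icc b a) x).eval u := by
    intro c
    filter_upwards [eventually_prod_one_sub_mul_ne_zero z (x c),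
      eventually_prod_one_sub_mul_ne_zero (-z) (x c)] with u hq hp
    simp only [Pi.neg_apply, neg_mul, sub_neg_eq_add] at hp
    simp only [f, G, Θ, mul_neg, sub_neg_eq_add, ← sub_eq_add_neg]
    rw [neg_div, ← div_div, div_prod_mul_prod_eq_prod_Ioo_div_prod_Icc hba hp hq, hD, hP,
      ← neg_sub t u]
    simp only [div_eq_mul_inv, mul_inv, inv_neg]
    ring
  obtain ⟨r, hr, hsum⟩ :=
    exists_tendsto_sub_mul_and_sum_eq (Icc b a) hx hPdeg _ (fun c => (ht c).1) hf
  refine ⟨r, hr, hsum.trans ?_⟩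
  rw [inv_mul_eq_div, div_div, ← hD, hP, ← Ioc_insert_left hba.le, ← Ioo_insert_right hba,
    prod_insert (by simp [hba.ne]), prod_insert (by simp), prod_div_distrib]
  simp only [div_eq_mul_inv, mul_inv]
  ring
end

section
/- Let $m\ge 0$ and define for $l\ge 0$ the element $P_{m+2l,l}=X^{m+1}\wedge X^{m+3}\wedge\cdots\wedge X^{m+2l-1}$ (with $P_{m,0}=1$), a skew-symmetric polynomial in $X_1,\dots,X_l$. Then for all $n=m+2l$, the linking condition holds: $P_{n+2,l+1}(X_1,\dots,X_l,z^{-1}\mid z_1,\dots,z_n,z,-z)=z^{-n-1}\prod_{a=1}^l(1-X_a^2z^2)\cdot P_{n,l}(X_1,\dots,X_l\mid z_1,\dots,z_n)$. -/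
/-!
Factoring `X_i^(m+1)` out of row `i` turns `det (X_i^(m+2j+1))` into `∏ X_i^(m+1)` times the
Vandermonde determinant of the squares `X_i^2`. Appending the variable `z⁻¹` to a Vandermonde
determinant multiplies it by `∏ (z⁻² - X_a^2) = z^(-2l) ∏ (1 - X_a^2 z^2)`, and the extra row
contributes `z^(-m-1)`.
-/

open Finset

theorem Fin.prod_Ioi_castSucc {M : Type*} [CommMonoid M] {n : ℕ} (f : Fin (n + 1) → M)
    (a : Fin n) : ∏ i > a.castSucc, f i = (∏ i > a, f i.castSucc) * f (Fin.last n) := by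
  rw [← Ioc_top, Fin.top_eq_last, ← Ioo_insert_right (Fin.castSucc_lt_last a),
    prod_insert (by simp), ← Fin.map_castSuccEmb_Ioi, prod_map, mul_comm]
  rfl

theorem Matrix.det_vandermonde_snoc {R : Type*} [CommRing R] {n : ℕ} (v : Fin n → R) (a : R) :
    (vandermonde (Fin.snoc v a : Fin (n + 1) → R)).det =
      (∏ i, (a - v i)) * (vandermonde v).det := by
  simp only [det_vandermonde, Fin.prod_univ_castSucc, Fin.prod_Ioi_castSucc, Fin.snoc_castSucc,
    Fin.snoc_last, show Ioi (Fin.last n) = ∅ from Ioi_top, prod_empty, mul_one, prod_mul_distrib]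
  ring

theorem Matrix.det_of_pow_add_mul {R : Type*} [CommRing R] {n : ℕ} (v : Fin n → R) (k d : ℕ) :
    (of fun i j : Fin n => v i ^ (k + d * j)).det =
      (∏ i, v i ^ k) * (vandermonde fun i => v i ^ d).det := by
  rw [← det_mul_column]
  congr 1
  ext i j
  simp [vandermonde_apply, pow_add, pow_mul]

/-- For `m ≥ 0`, the cycles
`P_{m+2l,l} = X^{m+1} ∧ X^{m+3} ∧ ⋯ ∧ X^{m+2l-1} = det(X_i^{m+2j-1})` satisfy the
linking condition
`P_{n+2,l+1}(X₁,…,X_l,z⁻¹) = z^{-n-1} ∏ₐ(1 - Xₐ²z²) · P_{n,l}(X₁,…,X_l)` for `n = m+2l`. -/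
theorem stmt10 (m l : ℕ) :
    let P : (l' : ℕ) → (Fin l' → ℂ) → ℂ := fun l' Xv =>
      Matrix.det (Matrix.of fun i j : Fin l' => Xv i ^ (m + 2 * (j : ℕ) + 1))
    ∀ (z : ℂ), z ≠ 0 → ∀ Xv : Fin l → ℂ,
      P (l + 1) (Fin.snoc Xv z⁻¹) =
        z⁻¹ ^ (m + 2 * l + 1) * (∏ a : Fin l, (1 - (Xv a) ^ 2 * z ^ 2)) * P l Xv := by
  intro P z hz Xv
  have hodd : ∀ j : ℕ, m + 2 * j + 1 = (m + 1) + 2 * j := fun j => by ring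
  have hsq : (fun i => (Fin.snoc Xv z⁻¹ : Fin (l + 1) → ℂ) i ^ 2) =
      Fin.snoc (fun i => Xv i ^ 2) (z⁻¹ ^ 2) :=
    Fin.comp_snoc (· ^ 2) Xv z⁻¹
  have hfactor : ∀ x : ℂ, z⁻¹ ^ 2 - x ^ 2 = z⁻¹ ^ 2 * (1 - x ^ 2 * z ^ 2) := fun x => by
    field_simp
  simp only [P, hodd, Matrix.det_of_pow_add_mul, hsq, Matrix.det_vandermonde_snoc,
    Fin.prod_univ_castSucc, Fin.snoc_castSucc, Fin.snoc_last, hfactor, prod_mul_distrib,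
    prod_const, card_univ, Fintype.card_fin]
  ring
end

section
/- Let $n\ge 2$, and let $P(X_1,\dots,X_l\mid z_1,\dots,z_n)$ be skew-symmetric in $X_1,\dots,X_l$ with coefficients symmetric Laurent polynomials in $z_1,\dots,z_n$. Suppose $(0,P)$ satisfies the linking condition with the zero cycle, i.e., $P$ vanishes whenever $X_l^{-1}=z_{n-1}=-z_n$ (minimality). Then $P$ is weakly minimal: $P$ vanishes whenever $X_{l-1}^{-1}=-X_l^{-1}=z_{n-1}=-z_n$. -/
/-- If a deformed cycle `P` (skew-symmetric in the `X`-variables, symmetric in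
the `z`-variables) is minimal, i.e. vanishes whenever `X_l⁻¹ = z_{n-1} = -z_n`, then it is
weakly minimal, i.e. vanishes whenever `X_{l-1}⁻¹ = -X_l⁻¹ = z_{n-1} = -z_n`.
(Here `P` has `l+2` `X`-variables and `n+2` `z`-variables.) -/
theorem stmt11 (l n : ℕ)
    (P : (Fin (l + 2) → ℂ) → (Fin (n + 2) → ℂ) → ℂ)
    (hskew : ∀ (σ : Equiv.Perm (Fin (l + 2))) (Xv : Fin (l + 2) → ℂ) (z : Fin (n + 2) → ℂ),
      P (Xv ∘ σ) z = ((Equiv.Perm.sign σ : ℤ) : ℂ) * P Xv z)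
    (hsym : ∀ (σ : Equiv.Perm (Fin (n + 2))) (Xv : Fin (l + 2) → ℂ) (z : Fin (n + 2) → ℂ),
      P Xv (z ∘ σ) = P Xv z)
    (hmin : ∀ (Xv : Fin (l + 1) → ℂ) (z : Fin n → ℂ) (w : ℂ), w ≠ 0 →
      P (Fin.snoc Xv w⁻¹) (Fin.snoc (Fin.snoc z w) (-w)) = 0) :
    ∀ (Xv : Fin l → ℂ) (z : Fin n → ℂ) (w : ℂ), w ≠ 0 →
      P (Fin.snoc (Fin.snoc Xv w⁻¹) (-w⁻¹)) (Fin.snoc (Fin.snoc z w) (-w)) = 0 := by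
  intro Xv z w hw
  have h := hmin (Fin.snoc Xv w⁻¹) z (-w) (neg_ne_zero.mpr hw)
  rw [inv_neg, neg_neg] at h
  set σ : Equiv.Perm (Fin (n + 2)) :=
    Equiv.swap (Fin.castSucc (Fin.last n)) (Fin.last (n + 1)) with hσ
  have key : (Fin.snoc (Fin.snoc z (-w)) w : Fin (n + 2) → ℂ) ∘ σ
      = Fin.snoc (Fin.snoc z w) (-w) := by
    funext i
    refine Fin.lastCases ?_ (fun j => ?_) i
    · show (Fin.snoc (Fin.snoc z (-w)) w : Fin (n + 2) → ℂ) (σ (Fin.last (n + 1))) = _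
      rw [hσ, Equiv.swap_apply_right]
      simp
    · refine Fin.lastCases ?_ (fun k => ?_) j
      · show (Fin.snoc (Fin.snoc z (-w)) w : Fin (n + 2) → ℂ)
          (σ (Fin.castSucc (Fin.last n))) = _
        rw [hσ, Equiv.swap_apply_left]
        simp
      · have h1 : σ (Fin.castSucc (Fin.castSucc k)) = Fin.castSucc (Fin.castSucc k) := by
          rw [hσ]
          apply Equiv.swap_apply_of_ne_of_ne <;>
            simp [Fin.ext_iff] <;> omega
        show (Fin.snoc (Fin.snoc z (-w)) w : Fin (n + 2) → ℂ)
          (σ (Fin.castSucc (Fin.castSucc k))) = _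
        rw [h1]
        simp
  calc P (Fin.snoc (Fin.snoc Xv w⁻¹) (-w⁻¹)) (Fin.snoc (Fin.snoc z w) (-w))
      = P (Fin.snoc (Fin.snoc Xv w⁻¹) (-w⁻¹)) ((Fin.snoc (Fin.snoc z (-w)) w) ∘ σ) := by
        rw [key]
    _ = P (Fin.snoc (Fin.snoc Xv w⁻¹) (-w⁻¹)) (Fin.snoc (Fin.snoc z (-w)) w) := hsym σ _ _
    _ = 0 := h
end

section
/- Let $(P_{n,l},P_{n+2,l+1})$ be a link, i.e., $P_{n+2,l+1}(X_1,\dots,X_l,z^{-1}\mid z_1,\dots,z_n,z,-z)=z^{-n-1}\prod_{a=1}^l(1-X_a^2 z^2)P_{n,l}(X_1,\dots,X_l\mid z_1,\dots,z_n)$, where $P_{n,l}$ and $P_{n+2,l+1}$ are skew-symmetric polynomials of the appropriate degrees with symmetric Laurent polynomial coefficients. Then both $P_{n,l}$ and $P_{n+2,l+1}$ are weakly minimal: each vanishes under the specialization $X_{k-1}^{-1}=-X_k^{-1}=z_{N-1}=-z_N$ of its last two $X$-variables and last two $z$-variables. -/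
/-!
Weak minimality of `Q` is immediate: swapping its last two `X`-variables costs a sign and puts
it in the form of the link relation at `w`, whose factor `1 - X² w²` vanishes at `X = -w⁻¹`.
For `P`, evaluate the link relation at a generic auxiliary point `s`: after rearranging the
variables of `Q`, its left-hand side is a weakly minimal specialization of `Q`, hence zero,
while the prefactor `s^(-n-3) ∏ (1 - X_a² s²)` of `P` on the right-hand side is nonzero.
-/

open Equiv Equiv.Perm

theorem Equiv.Perm.sign_viaFintypeEmbedding {α β : Type*} [Fintype α] [Fintype β]
    [DecidableEq α] [DecidableEq β] (σ : Perm α) (f : α ↪ β) :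
    sign (σ.viaFintypeEmbedding f) = sign σ := by
  rw [viaFintypeEmbedding, sign_extendDomain]

namespace Fin
variable {α : Type*} {m : ℕ}

theorem snoc_comp_viaFintypeEmbedding (x : Fin m → α) (a : α) (σ : Perm (Fin m)) :
    snoc (x ∘ σ) a = snoc x a ∘ σ.viaFintypeEmbedding castSuccEmb := by
  funext i
  induction i using lastCases with
  | last =>
    have hlast : σ.viaFintypeEmbedding castSuccEmb (last m) = last m :=
      viaFintypeEmbedding_apply_notMem_range _ _ (by simp)
    simp [hlast]
  | cast k =>
    have := σ.viaFintypeEmbedding_apply_image castSuccEmb k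
    simp only [castSuccEmb_apply] at this
    simp [this]

theorem snoc_snoc_comp_swap (x : Fin m → α) (a b : α) :
    (snoc (snoc x a) b : Fin (m + 2) → α) ∘ swap (last m).castSucc (last (m + 1)) =
      snoc (snoc x b) a := by
  funext i
  induction i using lastCases with
  | last => simp
  | cast j =>
    induction j using lastCases with
    | last => simp
    | cast k =>
      rw [Function.comp_apply, swap_apply_of_ne_of_ne] <;> simp [Fin.ext_iff] <;> omega

end Fin

open Fin

section Symmetry
variable {α β R : Type*} [Ring R] {k : ℕ}

def IsSymmetricFn (f : (Fin k → α) → β) : Prop :=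
  ∀ (σ : Perm (Fin k)) x, f (x ∘ σ) = f x

def IsSkewSymmetricFn (f : (Fin k → α) → R) : Prop :=
  ∀ (σ : Perm (Fin k)) x, f (x ∘ σ) = ((sign σ : ℤ) : R) * f x

namespace IsSymmetricFn

theorem comp_snoc {f : (Fin (k + 1) → α) → β} (hf : IsSymmetricFn f) (a : α) :
    IsSymmetricFn fun x : Fin k → α ↦ f (snoc x a) :=
  fun σ x ↦ by dsimp only; rw [snoc_comp_viaFintypeEmbedding, hf]

theorem snoc_snoc_swap {f : (Fin (k + 2) → α) → β} (hf : IsSymmetricFn f) (x : Fin k → α)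
    (a b : α) : f (snoc (snoc x a) b) = f (snoc (snoc x b) a) := by
  rw [← snoc_snoc_comp_swap, hf]

theorem snoc_snoc_snoc_rotate {f : (Fin (k + 3) → α) → β} (hf : IsSymmetricFn f)
    (x : Fin k → α) (a b c : α) :
    f (snoc (snoc (snoc x a) b) c) = f (snoc (snoc (snoc x c) a) b) := by
  rw [hf.snoc_snoc_swap, (hf.comp_snoc b).snoc_snoc_swap]

theorem snoc_snoc_snoc_snoc_swap_pairs {f : (Fin (k + 4) → α) → β} (hf : IsSymmetricFn f)
    (x : Fin k → α) (a b c d : α) :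
    f (snoc (snoc (snoc (snoc x a) b) c) d) = f (snoc (snoc (snoc (snoc x c) d) a) b) := by
  rw [(hf.comp_snoc d).snoc_snoc_snoc_rotate, hf.snoc_snoc_snoc_rotate]

end IsSymmetricFn

namespace IsSkewSymmetricFn

theorem comp_snoc {f : (Fin (k + 1) → α) → R} (hf : IsSkewSymmetricFn f) (a : α) :
    IsSkewSymmetricFn fun x : Fin k → α ↦ f (snoc x a) :=
  fun σ x ↦ by dsimp only; rw [snoc_comp_viaFintypeEmbedding, hf, sign_viaFintypeEmbedding]

theorem snoc_snoc_swap {f : (Fin (k + 2) → α) → R} (hf : IsSkewSymmetricFn f) (x : Fin k → α)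
    (a b : α) : f (snoc (snoc x a) b) = -f (snoc (snoc x b) a) := by
  rw [← snoc_snoc_comp_swap, hf, sign_swap (castSucc_lt_last _).ne]
  simp

theorem snoc_snoc_snoc_rotate {f : (Fin (k + 3) → α) → R} (hf : IsSkewSymmetricFn f)
    (x : Fin k → α) (a b c : α) :
    f (snoc (snoc (snoc x a) b) c) = f (snoc (snoc (snoc x c) a) b) := by
  rw [hf.snoc_snoc_swap, (hf.comp_snoc b).snoc_snoc_swap, neg_neg]

end IsSkewSymmetricFn

end Symmetry

open Polynomial in
theorem exists_ne_zero_prod_one_sub_sq_mul_sq_ne_zero {K : Type*} [Field K] [Infinite K] {k : ℕ}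
    (x : Fin k → K) : ∃ s ≠ 0, ∏ a, (1 - x a ^ 2 * s ^ 2) ≠ 0 := by
  set p : K[X] := X * ∏ a, (1 - C (x a ^ 2) * X ^ 2)
  have hp : p ≠ 0 := by
    refine mul_ne_zero X_ne_zero (Finset.prod_ne_zero_iff.mpr fun a _ h ↦ ?_)
    simpa using congrArg (eval 0) h
  obtain ⟨s, hs⟩ : ∃ s, p.eval s ≠ 0 := by
    by_contra! h
    exact hp (zero_of_eval_zero p h)
  simp only [p, eval_mul, eval_X, eval_prod, eval_sub, eval_one, eval_C, eval_pow] at hs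
  exact ⟨s, left_ne_zero_of_mul hs, right_ne_zero_of_mul hs⟩

section Link
variable {K : Type*} [Field K]

def IsWeaklyMinimal {k N : ℕ} (P : (Fin (k + 2) → K) → (Fin (N + 2) → K) → K) : Prop :=
  ∀ (Xv : Fin k → K) (z : Fin N → K) (w : K), w ≠ 0 →
    P (snoc (snoc Xv w⁻¹) (-w⁻¹)) (snoc (snoc z w) (-w)) = 0

variable {l n : ℕ} {P : (Fin (l + 2) → K) → (Fin (n + 2) → K) → K}
  {Q : (Fin (l + 3) → K) → (Fin (n + 4) → K) → K}

def IsLink (P : (Fin (l + 2) → K) → (Fin (n + 2) → K) → K)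
    (Q : (Fin (l + 3) → K) → (Fin (n + 4) → K) → K) : Prop :=
  ∀ (Xv : Fin (l + 2) → K) (z : Fin (n + 2) → K) (w : K), w ≠ 0 →
    Q (snoc Xv w⁻¹) (snoc (snoc z w) (-w)) =
      w⁻¹ ^ (n + 3) * (∏ a, (1 - Xv a ^ 2 * w ^ 2)) * P Xv z

namespace IsLink

theorem isWeaklyMinimal_right (hPQ : IsLink P Q) (hQ : ∀ z, IsSkewSymmetricFn (Q · z)) :
    IsWeaklyMinimal Q := by
  intro Y z w hw
  have hprod : ∏ a, (1 - (snoc Y (-w⁻¹) : Fin (l + 2) → K) a ^ 2 * w ^ 2) = 0 :=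
    Finset.prod_eq_zero (Finset.mem_univ (last _)) (by simp [hw])
  rw [IsSkewSymmetricFn.snoc_snoc_swap (hQ _), hPQ _ _ _ hw, hprod]
  simp

theorem isWeaklyMinimal_left [Infinite K] (hPQ : IsLink P Q)
    (hQskew : ∀ z, IsSkewSymmetricFn (Q · z)) (hQsym : ∀ X, IsSymmetricFn (Q X)) :
    IsWeaklyMinimal P := by
  intro Xv z w hw
  set X : Fin (l + 2) → K := snoc (snoc Xv w⁻¹) (-w⁻¹)
  obtain ⟨s, hs, hprod⟩ := exists_ne_zero_prod_one_sub_sq_mul_sq_ne_zero X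
  have hQ : Q (snoc X s⁻¹) (snoc (snoc (snoc (snoc z w) (-w)) s) (-s)) = 0 := by
    rw [IsSkewSymmetricFn.snoc_snoc_snoc_rotate (hQskew _),
      IsSymmetricFn.snoc_snoc_snoc_snoc_swap_pairs (hQsym _)]
    exact hPQ.isWeaklyMinimal_right hQskew (snoc Xv s⁻¹) (snoc (snoc z s) (-s)) w hw
  rw [hPQ X _ s hs] at hQ
  simpa [hs, hprod] using hQ

end IsLink
end Link

theorem stmt12_general (l n : ℕ)
    (P : (Fin (l + 2) → ℂ) → (Fin (n + 2) → ℂ) → ℂ)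
    (Q : (Fin (l + 3) → ℂ) → (Fin (n + 4) → ℂ) → ℂ)
    (hskewQ : ∀ (σ : Equiv.Perm (Fin (l + 3))) Xv z,
      Q (Xv ∘ σ) z = ((Equiv.Perm.sign σ : ℤ) : ℂ) * Q Xv z)
    (hsymQ : ∀ (σ : Equiv.Perm (Fin (n + 4))) Xv z, Q Xv (z ∘ σ) = Q Xv z)
    (hlink : ∀ (Xv : Fin (l + 2) → ℂ) (z : Fin (n + 2) → ℂ) (w : ℂ), w ≠ 0 →
      Q (Fin.snoc Xv w⁻¹) (Fin.snoc (Fin.snoc z w) (-w)) =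
        w⁻¹ ^ (n + 3) * (∏ a : Fin (l + 2), (1 - (Xv a) ^ 2 * w ^ 2)) * P Xv z) :
    (∀ (Xv : Fin l → ℂ) (z : Fin n → ℂ) (w : ℂ), w ≠ 0 →
      P (Fin.snoc (Fin.snoc Xv w⁻¹) (-w⁻¹)) (Fin.snoc (Fin.snoc z w) (-w)) = 0) ∧
    (∀ (Xv : Fin (l + 1) → ℂ) (z : Fin (n + 2) → ℂ) (w : ℂ), w ≠ 0 →
      Q (Fin.snoc (Fin.snoc Xv w⁻¹) (-w⁻¹)) (Fin.snoc (Fin.snoc z w) (-w)) = 0) := by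
  have hPQ : IsLink P Q := hlink
  have hQskew : ∀ z, IsSkewSymmetricFn (Q · z) := fun z σ Xv ↦ hskewQ σ Xv z
  have hQsym : ∀ X, IsSymmetricFn (Q X) := fun X σ z ↦ hsymQ σ X z
  exact ⟨hPQ.isWeaklyMinimal_left hQskew hQsym, hPQ.isWeaklyMinimal_right hQskew⟩

/-- If `(P,Q)` is a link of deformed cycles (here `P` has `l+2` `X`-variables
and `n+2` `z`-variables, `Q` has `l+3` `X`-variables and `n+4` `z`-variables), then both `P`
and `Q` are weakly minimal: each vanishes under the specialization
`X_{k-1}⁻¹ = -X_k⁻¹ = z_{N-1} = -z_N` of its last two `X`- and `z`-variables. -/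
theorem stmt12 (l n : ℕ)
    (P : (Fin (l + 2) → ℂ) → (Fin (n + 2) → ℂ) → ℂ)
    (Q : (Fin (l + 3) → ℂ) → (Fin (n + 4) → ℂ) → ℂ)
    (hskewP : ∀ (σ : Equiv.Perm (Fin (l + 2))) Xv z,
      P (Xv ∘ σ) z = ((Equiv.Perm.sign σ : ℤ) : ℂ) * P Xv z)
    (hskewQ : ∀ (σ : Equiv.Perm (Fin (l + 3))) Xv z,
      Q (Xv ∘ σ) z = ((Equiv.Perm.sign σ : ℤ) : ℂ) * Q Xv z)
    (hsymP : ∀ (σ : Equiv.Perm (Fin (n + 2))) Xv z, P Xv (z ∘ σ) = P Xv z)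
    (hsymQ : ∀ (σ : Equiv.Perm (Fin (n + 4))) Xv z, Q Xv (z ∘ σ) = Q Xv z)
    (hlink : ∀ (Xv : Fin (l + 2) → ℂ) (z : Fin (n + 2) → ℂ) (w : ℂ), w ≠ 0 →
      Q (Fin.snoc Xv w⁻¹) (Fin.snoc (Fin.snoc z w) (-w)) =
        w⁻¹ ^ (n + 3) * (∏ a : Fin (l + 2), (1 - (Xv a) ^ 2 * w ^ 2)) * P Xv z) :
    (∀ (Xv : Fin l → ℂ) (z : Fin n → ℂ) (w : ℂ), w ≠ 0 →
      P (Fin.snoc (Fin.snoc Xv w⁻¹) (-w⁻¹)) (Fin.snoc (Fin.snoc z w) (-w)) = 0) ∧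
    (∀ (Xv : Fin (l + 1) → ℂ) (z : Fin (n + 2) → ℂ) (w : ℂ), w ≠ 0 →
      Q (Fin.snoc (Fin.snoc Xv w⁻¹) (-w⁻¹)) (Fin.snoc (Fin.snoc z w) (-w)) = 0) :=
  stmt12_general l n P Q hskewQ hsymQ hlink
end

section
/- Let $(P_{n,l},P_{n+2,l+1})$ be a link of deformed cycles, and let $g$ act componentwise by the operator $\mathcal{X}^-_{>0}(t)$ given by $P\mapsto F_N(t)\wedge P$ (on a cycle in $N$ z-variables), where $F_N(t|X)=\frac{t}{2(X-t)}\frac{\Theta_N(t,-X)}{\Theta_N(t)}$. Then the pair $(F_n(t)\wedge P_{n,l},\,F_{n+2}(t)\wedge P_{n+2,l+1})$ is again a link, i.e., the linking condition $Q_{n+2,l+2}(X_1,\dots,X_{l+1},z^{-1}\mid z_1,\dots,z_n,z,-z)=z^{-n-1}\prod_{a=1}^{l+1}(1-X_a^2z^2)\,Q_{n,l+1}(X_1,\dots,X_{l+1}\mid z_1,\dots,z_n)$ holds for $Q_{n,l+1}=F_n(t)\wedge P_{n,l}$ and $Q_{n+2,l+2}=F_{n+2}(t)\wedge P_{n+2,l+1}$,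 as an identity of formal power series in $t$. -/
noncomputable section

/-- `Θ_N(u) = ∏_j (1 - z_j u)` for a vector `z` of variables. -/
def Theta {N : ℕ} (z : Fin N → ℂ) (u : ℂ) : ℂ := ∏ j, (1 - z j * u)

/-- `F_N(t|x) = t/(2(x-t)) · (Θ_N(t)Θ_N(-x) - Θ_N(-t)Θ_N(x))/Θ_N(t)`. -/
def Fcur {N : ℕ} (z : Fin N → ℂ) (t x : ℂ) : ℂ :=
  t / (2 * (x - t)) * ((Theta z t * Theta z (-x) - Theta z (-t) * Theta z x) / Theta z t)

/-- The wedge `F ∧ P` of a one-variable function with an `l`-variable function: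
`(F ∧ P)(X₁,…,X_{l+1}) = (1/l!) Skew (F(X₁) P(X₂,…,X_{l+1}))`. -/
def wedge1 {l : ℕ} (F : ℂ → ℂ) (P : (Fin l → ℂ) → ℂ) : (Fin (l + 1) → ℂ) → ℂ :=
  fun Xv => ((l.factorial : ℂ))⁻¹ *
    ∑ σ : Equiv.Perm (Fin (l + 1)),
      ((Equiv.Perm.sign σ : ℤ) : ℂ) * F (Xv (σ 0)) * P (fun i => Xv (σ i.succ))

lemma Theta_snoc {N : ℕ} (z : Fin N → ℂ) (c u : ℂ) :
    Theta (Fin.snoc z c) u = Theta z u * (1 - c * u) := by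
  simp [Theta, Fin.prod_univ_castSucc]

lemma Fcur_snoc {n : ℕ} (z : Fin n → ℂ) (w t x : ℂ) (hΘ : Theta z t ≠ 0)
    (h1 : 1 - w * t ≠ 0) (h2 : 1 + w * t ≠ 0) :
    Fcur (Fin.snoc (Fin.snoc z w) (-w)) t x = (1 - x ^ 2 * w ^ 2) * Fcur z t x := by
  have h2' : (1 : ℂ) - (-w) * t ≠ 0 := by
    rw [show (1:ℂ) - (-w) * t = 1 + w * t by ring]; exact h2
  have key : ∀ A B C D : ℂ, A ≠ 0 →
      (A * (1 - w * t) * (1 - -w * t) * (B * (1 - w * (-x)) * (1 - -w * (-x)))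
          - C * (1 - w * (-t)) * (1 - -w * (-t)) * (D * (1 - w * x) * (1 - -w * x)))
        / (A * (1 - w * t) * (1 - -w * t))
      = (1 - x ^ 2 * w ^ 2) * ((A * B - C * D) / A) := by
    intro A B C D hA
    rw [← mul_div_assoc,
      div_eq_div_iff (mul_ne_zero (mul_ne_zero hA h1) h2') hA]
    ring
  simp only [Fcur, Theta_snoc]
  rw [key _ _ _ _ hΘ]
  ring

lemma Fcur_snoc_inv {n : ℕ} (z : Fin n → ℂ) (w t : ℂ) (hw : w ≠ 0) :
    Fcur (Fin.snoc (Fin.snoc z w) (-w)) t w⁻¹ = 0 := by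
  have hww : w * w⁻¹ = 1 := mul_inv_cancel₀ hw
  have e1 : Theta (Fin.snoc (Fin.snoc z w) (-w)) w⁻¹ = 0 := by
    simp [Theta_snoc, hww]
  have e2 : Theta (Fin.snoc (Fin.snoc z w) (-w)) (-w⁻¹) = 0 := by
    simp only [Theta_snoc]
    rw [show (1 : ℂ) - (-w) * (-w⁻¹) = 1 - w * w⁻¹ by ring, hww]
    simp
  rw [Fcur, e1, e2]
  simp

lemma comp_succAbove {l : ℕ} (Xv : Fin (l + 1) → ℂ) (c : ℂ) (k : Fin (l + 1)) :
    (Fin.snoc Xv c : Fin (l + 2) → ℂ) ∘ (Fin.castSucc k).succAbove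
      = Fin.snoc (Xv ∘ k.succAbove) c := by
  funext i
  induction i using Fin.lastCases with
  | last =>
    have h : (Fin.castSucc k).succAbove (Fin.last l) = Fin.last (l + 1) := by
      rw [Fin.succAbove_of_le_castSucc _ _ (by
        simpa using Fin.le_last k), Fin.succ_last]
    simp [h]
  | cast j =>
    simp [Fin.castSucc_succAbove_castSucc]

lemma wedge1_expand (l : ℕ) (F : ℂ → ℂ) (P : (Fin l → ℂ) → ℂ)
    (hskew : ∀ (σ : Equiv.Perm (Fin l)) Xv,
      P (Xv ∘ σ) = ((Equiv.Perm.sign σ : ℤ) : ℂ) * P Xv)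
    (Xv : Fin (l + 1) → ℂ) :
    wedge1 F P Xv
      = ∑ k : Fin (l + 1), (-1 : ℂ) ^ (k : ℕ) * F (Xv k) * P (Xv ∘ k.succAbove) := by
  classical
  set f : Fin (l + 1) × Equiv.Perm (Fin l) → Equiv.Perm (Fin (l + 1)) :=
    fun kp => (Fin.cycleRange kp.1)⁻¹ * Equiv.Perm.decomposeFin.symm (0, kp.2) with hf
  have hf0 : ∀ kp, f kp 0 = kp.1 := by
    rintro ⟨k, π⟩
    simp [hf, Equiv.Perm.mul_apply, Equiv.Perm.inv_def]
  have hfs : ∀ kp (i : Fin l), f kp i.succ = kp.1.succAbove (kp.2 i) := by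
    rintro ⟨k, π⟩ i
    simp [hf, Equiv.Perm.mul_apply, Equiv.Perm.inv_def,
      Equiv.Perm.decomposeFin_symm_apply_succ]
  have hinj : Function.Injective f := by
    rintro ⟨k, π⟩ ⟨k', π'⟩ h
    have hk : k = k' := by
      have := congrArg (fun σ : Equiv.Perm (Fin (l + 1)) => σ 0) h
      simpa [hf0 (k, π), hf0 (k', π')] using this
    subst hk
    have h2 : Equiv.Perm.decomposeFin.symm (0, π) = Equiv.Perm.decomposeFin.symm (0, π') :=
      mul_left_cancel h
    have := Equiv.Perm.decomposeFin.symm.injective h2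
    simp only [Prod.mk.injEq] at this
    exact Prod.ext rfl this.2
  have hbij : Function.Bijective f := by
    rw [Fintype.bijective_iff_injective_and_card]
    refine ⟨hinj, ?_⟩
    simp [Fintype.card_perm, Nat.factorial_succ]
  have hsign : ∀ kp, ((Equiv.Perm.sign (f kp) : ℤ) : ℂ)
      = (-1 : ℂ) ^ ((kp.1 : Fin (l+1)) : ℕ) * ((Equiv.Perm.sign kp.2 : ℤ) : ℂ) := by
    rintro ⟨k, π⟩
    have : Equiv.Perm.sign (f (k, π))
        = (-1) ^ (k : ℕ) * Equiv.Perm.sign π := by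
      rw [hf]
      simp [Equiv.Perm.decomposeFin.symm_sign, Fin.sign_cycleRange]
    rw [this]
    push_cast
    ring
  have hterm : ∀ kp : Fin (l + 1) × Equiv.Perm (Fin l),
      ((Equiv.Perm.sign (f kp) : ℤ) : ℂ) * F (Xv (f kp 0)) * P (fun i => Xv (f kp i.succ))
        = (-1 : ℂ) ^ ((kp.1 : Fin (l+1)) : ℕ) * F (Xv kp.1) * P (Xv ∘ kp.1.succAbove) := by
    rintro ⟨k, π⟩
    have harg : (fun i => Xv (f (k, π) i.succ)) = (Xv ∘ k.succAbove) ∘ π := by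
      funext i
      simp [hfs (k, π) i]
    rw [hf0 (k, π), harg, hskew π, hsign (k, π)]
    have hu : ((Equiv.Perm.sign π : ℤ) : ℂ) * ((Equiv.Perm.sign π : ℤ) : ℂ) = 1 := by
      have hu1 : Equiv.Perm.sign π * Equiv.Perm.sign π = 1 := Int.units_mul_self _
      have : ((Equiv.Perm.sign π : ℤ) * (Equiv.Perm.sign π : ℤ)) = 1 := by
        rw [← Units.val_mul, hu1, Units.val_one]
      calc ((Equiv.Perm.sign π : ℤ) : ℂ) * ((Equiv.Perm.sign π : ℤ) : ℂ)
          = (((Equiv.Perm.sign π : ℤ) * (Equiv.Perm.sign π : ℤ) : ℤ) : ℂ) := by push_cast; ring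
        _ = 1 := by rw [this]; norm_num
    calc (-1 : ℂ) ^ (k : ℕ) * ((Equiv.Perm.sign π : ℤ) : ℂ) * F (Xv k)
          * (((Equiv.Perm.sign π : ℤ) : ℂ) * P (Xv ∘ k.succAbove))
        = ((Equiv.Perm.sign π : ℤ) : ℂ) * ((Equiv.Perm.sign π : ℤ) : ℂ)
            * ((-1 : ℂ) ^ (k : ℕ) * F (Xv k) * P (Xv ∘ k.succAbove)) := by ring
      _ = (-1 : ℂ) ^ (k : ℕ) * F (Xv k) * P (Xv ∘ k.succAbove) := by rw [hu]; ring
  have hsum : ∑ σ : Equiv.Perm (Fin (l + 1)),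
      ((Equiv.Perm.sign σ : ℤ) : ℂ) * F (Xv (σ 0)) * P (fun i => Xv (σ i.succ))
      = ∑ kp : Fin (l + 1) × Equiv.Perm (Fin l),
          (-1 : ℂ) ^ ((kp.1 : Fin (l+1)) : ℕ) * F (Xv kp.1) * P (Xv ∘ kp.1.succAbove) := by
    rw [← Function.Bijective.sum_comp hbij
      (fun σ => ((Equiv.Perm.sign σ : ℤ) : ℂ) * F (Xv (σ 0)) * P (fun i => Xv (σ i.succ)))]
    exact Finset.sum_congr rfl fun kp _ => hterm kp
  rw [wedge1, hsum, Fintype.sum_prod_type]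
  have hcard : (Fintype.card (Equiv.Perm (Fin l)) : ℂ) = (l.factorial : ℂ) := by
    simp [Fintype.card_perm]
  have hfac : (l.factorial : ℂ) ≠ 0 := by
    exact_mod_cast Nat.factorial_ne_zero l
  simp only [Finset.sum_const, Finset.card_univ, nsmul_eq_mul, hcard]
  rw [← Finset.mul_sum, inv_mul_cancel_left₀ hfac]

/-- if `(P_{n,l}, P_{n+2,l+1})` is a link, then
`(F_n(t) ∧ P_{n,l}, F_{n+2}(t) ∧ P_{n+2,l+1})` is again a link, as an identity of formal
power series in `t` (stated here for all values of `t` away from the poles). -/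
theorem stmt17 (n l : ℕ)
    (P : (Fin l → ℂ) → (Fin n → ℂ) → ℂ)
    (Q : (Fin (l + 1) → ℂ) → (Fin (n + 2) → ℂ) → ℂ)
    (hskewP : ∀ (σ : Equiv.Perm (Fin l)) Xv z,
      P (Xv ∘ σ) z = ((Equiv.Perm.sign σ : ℤ) : ℂ) * P Xv z)
    (hskewQ : ∀ (σ : Equiv.Perm (Fin (l + 1))) Xv z,
      Q (Xv ∘ σ) z = ((Equiv.Perm.sign σ : ℤ) : ℂ) * Q Xv z)
    (hsymP : ∀ (σ : Equiv.Perm (Fin n)) Xv z, P Xv (z ∘ σ) = P Xv z)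
    (hsymQ : ∀ (σ : Equiv.Perm (Fin (n + 2))) Xv z, Q Xv (z ∘ σ) = Q Xv z)
    (hlink : ∀ (Xv : Fin l → ℂ) (z : Fin n → ℂ) (w : ℂ), w ≠ 0 →
      Q (Fin.snoc Xv w⁻¹) (Fin.snoc (Fin.snoc z w) (-w)) =
        w⁻¹ ^ (n + 1) * (∏ a, (1 - (Xv a) ^ 2 * w ^ 2)) * P Xv z) :
    ∀ (t : ℂ) (z : Fin n → ℂ) (w : ℂ) (Xv : Fin (l + 1) → ℂ),
      w ≠ 0 → (∀ j, 1 - z j * t ≠ 0) → 1 - w * t ≠ 0 → 1 + w * t ≠ 0 →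
      (∀ a, Xv a ≠ t) → w⁻¹ ≠ t →
      wedge1 (Fcur (Fin.snoc (Fin.snoc z w) (-w)) t) (Q · (Fin.snoc (Fin.snoc z w) (-w)))
          (Fin.snoc Xv w⁻¹) =
        w⁻¹ ^ (n + 1) * (∏ a : Fin (l + 1), (1 - (Xv a) ^ 2 * w ^ 2)) *
          wedge1 (Fcur z t) (P · z) Xv := by
  intro t z w Xv hw hzt h1 h2 hXt hwt
  have hΘ : Theta z t ≠ 0 := by
    rw [Theta]
    exact Finset.prod_ne_zero_iff.2 fun j _ => hzt j
  rw [wedge1_expand (l + 1) _ _ (fun σ Xv' => hskewQ σ Xv' _),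
    wedge1_expand l _ _ (fun σ Xv' => hskewP σ Xv' z)]
  rw [Fin.sum_univ_castSucc]
  have hlastterm : (-1 : ℂ) ^ ((Fin.last (l + 1) : Fin (l+2)) : ℕ)
      * Fcur (Fin.snoc (Fin.snoc z w) (-w)) t ((Fin.snoc Xv w⁻¹ : Fin (l+2) → ℂ) (Fin.last (l + 1)))
      * Q ((Fin.snoc Xv w⁻¹ : Fin (l+2) → ℂ) ∘ (Fin.last (l + 1)).succAbove)
          (Fin.snoc (Fin.snoc z w) (-w)) = 0 := by
    rw [Fin.snoc_last, Fcur_snoc_inv z w t hw]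
    ring
  rw [hlastterm, add_zero, Finset.mul_sum]
  refine Finset.sum_congr rfl fun k _ => ?_
  rw [Fin.snoc_castSucc, comp_succAbove, hlink (Xv ∘ k.succAbove) z w hw,
    Fcur_snoc z w t (Xv k) hΘ h1 h2, Fin.coe_castSucc,
    Fin.prod_univ_succAbove (fun a => 1 - (Xv a) ^ 2 * w ^ 2) k]
  simp only [Function.comp_apply]
  ring
end
end
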